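/- arXiv:1102.4392 — 6 statements merged into one kernel-verified Lean document; each statement's English description precedes it below -/
import Mathlib

section
/- Let δ : ℤ → ℂ and let f : ℤ × ℤ × ℤ → ℂ (written f^t_{n,m}) be nowhere vanishing and satisfy the discrete KP equation −δ_m f^{t+1}_{n,m} f^t_{n+1,m+1} + (1+δ_m) f^t_{n+1,m} f^{t+1}_{n,m+1} − f^t_{n,m+1} f^{t+1}_{n+1,m} = 0 for all n, m, t. Define I^t_{n,m} := (1+δ_m) f^t_{n,m} f^{t+1}_{n,m+1} / (f^t_{n,m+1} f^{t+1}_{n,m}) and V^t_{n,m} := δ_m f^t_{n,m} f^t_{n+1,m+1} / (f^t_{n+1,m} f^t_{n,m+1}). Then for all n, m, t one has I^t_{n,m+1} + V^{t+1}_{n,m} = I^t_{n+1,m} + V^t_{n,m+1} and I^t_{n,m} V^{t+1}_{n,m} = I^t_{n+1,m} V^t_{n,m}. -/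
/-!
The additive equation is a conservation law: both `I^t_{n+1,m} - V^{t+1}_{n,m}` and
`I^t_{n,m+1} - V^t_{n,m+1}` equal the same ratio of four values of `f`, the first by the
bilinear equation at `(t, n, m)` and the second by the bilinear equation at `(t, n, m + 1)`.
The multiplicative equation holds for any nowhere-vanishing `f`: after substituting the
definitions, both sides are the same product of ratios.
-/

namespace DKP

variable {K : Type*} [Field K] (δ : ℤ → K) (f : ℤ → ℤ → ℤ → K)

def bilinear (t n m : ℤ) : K :=
  -δ m * f (t + 1) n m * f t (n + 1) (m + 1)
    + (1 + δ m) * f t (n + 1) m * f (t + 1) n (m + 1)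
    - f t n (m + 1) * f (t + 1) (n + 1) m

def I (t n m : ℤ) : K :=
  (1 + δ m) * f t n m * f (t + 1) n (m + 1) / (f t n (m + 1) * f (t + 1) n m)

def V (t n m : ℤ) : K :=
  δ m * f t n m * f t (n + 1) (m + 1) / (f t (n + 1) m * f t n (m + 1))

def crossRatio (t n m : ℤ) : K :=
  f t n (m + 1) * f (t + 1) (n + 1) (m + 1) / (f (t + 1) n (m + 1) * f t (n + 1) (m + 1))

variable {δ f}

theorem I_succ_n_sub_V_succ_t (hf : ∀ t n m, f t n m ≠ 0) {t n m : ℤ}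
    (hKP : bilinear δ f t n m = 0) :
    I δ f t (n + 1) m - V δ f (t + 1) n m = crossRatio f t n m := by
  unfold bilinear at hKP
  unfold I V crossRatio
  field_simp [hf]
  linear_combination hKP

theorem I_succ_m_sub_V_succ_m (hf : ∀ t n m, f t n m ≠ 0) {t n m : ℤ}
    (hKP : bilinear δ f t n (m + 1) = 0) :
    I δ f t n (m + 1) - V δ f t n (m + 1) = crossRatio f t n m := by
  unfold bilinear at hKP
  unfold I V crossRatio
  field_simp [hf]
  linear_combination hKP

theorem I_succ_m_add_V_succ_t (hf : ∀ t n m, f t n m ≠ 0) {t n m : ℤ}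
    (hKP : bilinear δ f t n m = 0) (hKP' : bilinear δ f t n (m + 1) = 0) :
    I δ f t n (m + 1) + V δ f (t + 1) n m = I δ f t (n + 1) m + V δ f t n (m + 1) := by
  linear_combination I_succ_m_sub_V_succ_m hf hKP' - I_succ_n_sub_V_succ_t hf hKP

theorem I_mul_V_succ_t (hf : ∀ t n m, f t n m ≠ 0) (t n m : ℤ) :
    I δ f t n m * V δ f (t + 1) n m = I δ f t (n + 1) m * V δ f t n m := by
  unfold I V
  field_simp [hf]

end DKP

/-- from the bilinear discrete KP equation for a nowhere-vanishing
tau function `f`, the variables `I`, `V` defined as the stated ratios satisfy the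
conservation form of dKP. -/
theorem dKP_IV_form (δ : ℤ → ℂ) (f : ℤ → ℤ → ℤ → ℂ)
    (hf : ∀ t n m, f t n m ≠ 0)
    (hKP : ∀ t n m,
      -δ m * f (t + 1) n m * f t (n + 1) (m + 1)
        + (1 + δ m) * f t (n + 1) m * f (t + 1) n (m + 1)
        - f t n (m + 1) * f (t + 1) (n + 1) m = 0)
    (I V : ℤ → ℤ → ℤ → ℂ)
    (hI : ∀ t n m, I t n m =
      (1 + δ m) * f t n m * f (t + 1) n (m + 1) / (f t n (m + 1) * f (t + 1) n m))
    (hV : ∀ t n m, V t n m =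
      δ m * f t n m * f t (n + 1) (m + 1) / (f t (n + 1) m * f t n (m + 1))) :
    ∀ t n m,
      I t n (m + 1) + V (t + 1) n m = I t (n + 1) m + V t n (m + 1) ∧
      I t n m * V (t + 1) n m = I t (n + 1) m * V t n m := by
  obtain rfl : I = DKP.I δ f := funext₃ hI
  obtain rfl : V = DKP.V δ f := funext₃ hV
  intro t n m
  exact ⟨DKP.I_succ_m_add_V_succ_t hf (hKP t n m) (hKP t n (m + 1)), DKP.I_mul_V_succ_t hf t n m⟩
end

section
/- Let I, I', V, V', D : ℤ → ℂ be functions, all of whose values are nonzero, such that for every m: D_m = (V_m / I'_{m−1})(1 + D_{m−1}), I_m = V_m (1 + D_m^{−1}), and I_m V'_m = I'_m V_m. Then I_{m+1} = V_{m+1} + I'_m − V'_m for every m. -/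
/-! The consistency relation gives `V'ₘ = I'ₘ Dₘ / (1 + Dₘ)`, hence `I'ₘ - V'ₘ = I'ₘ / (1 + Dₘ)`,
and by the recursion this is `Vₘ₊₁ / Dₘ₊₁ = Iₘ₊₁ - Vₘ₊₁`. -/

section Field

variable {K : Type*} [Field K]

theorem one_add_mul_eq_of_mul_one_add_inv_mul {v v' i' d : K} (hv : v ≠ 0) (hd : d ≠ 0)
    (h : v * (1 + d⁻¹) * v' = i' * v) : (1 + d) * v' = i' * d := by
  field_simp at h
  linear_combination h

theorem sub_eq_div_one_add_of_one_add_mul_eq {v' i' d : K} (hd : 1 + d ≠ 0)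
    (h : (1 + d) * v' = i' * d) : i' - v' = i' / (1 + d) := by
  field_simp
  linear_combination -h

theorem mul_one_add_inv_of_eq_div_mul {v i c d : K} (hv : v ≠ 0) (h : d = v / i * c) :
    v * (1 + d⁻¹) = v + i / c := by
  rw [h, mul_one_add, mul_inv, inv_div, ← mul_assoc, mul_div_cancel₀ _ hv, div_eq_mul_inv]

end Field

theorem dKP_from_D_recursion_general (I I' V V' D : ℤ → ℂ)
    (hV : ∀ m, V m ≠ 0) (hD : ∀ m, D m ≠ 0)
    (hrec : ∀ m, D m = V m / I' (m - 1) * (1 + D (m - 1)))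
    (hIV : ∀ m, I m = V m * (1 + (D m)⁻¹))
    (hcons : ∀ m, I m * V' m = I' m * V m) :
    ∀ m, I (m + 1) = V (m + 1) + I' m - V' m := by
  intro m
  have hrec_succ : D (m + 1) = V (m + 1) / I' m * (1 + D m) := by simpa using hrec (m + 1)
  have h_one_add : 1 + D m ≠ 0 := right_ne_zero_of_mul (hrec_succ ▸ hD (m + 1))
  have hV' : (1 + D m) * V' m = I' m * D m :=
    one_add_mul_eq_of_mul_one_add_inv_mul (hV m) (hD m) (hIV m ▸ hcons m)
  rw [hIV (m + 1), mul_one_add_inv_of_eq_div_mul (hV (m + 1)) hrec_succ, add_sub_assoc,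
    sub_eq_div_one_add_of_one_add_mul_eq h_one_add hV']

/-- Lemma 1.1 of the paper in recursive form. -/
theorem dKP_from_D_recursion (I I' V V' D : ℤ → ℂ)
    (hI : ∀ m, I m ≠ 0) (hI' : ∀ m, I' m ≠ 0)
    (hV : ∀ m, V m ≠ 0) (hV' : ∀ m, V' m ≠ 0) (hD : ∀ m, D m ≠ 0)
    (hrec : ∀ m, D m = V m / I' (m - 1) * (1 + D (m - 1)))
    (hIV : ∀ m, I m = V m * (1 + (D m)⁻¹))
    (hcons : ∀ m, I m * V' m = I' m * V m) :
    ∀ m, I (m + 1) = V (m + 1) + I' m - V' m :=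
  dKP_from_D_recursion_general I I' V V' D hV hD hrec hIV hcons
end

section
/- Let M, N ≥ 1, β ∈ ℂ, and d := gcd(N, M). Let X ∈ W(β) and let D be an invertible M×M diagonal matrix with complex entries. Then D X D^{−1} ∈ W(β) if and only if S^d D S^{−d} = D (equivalently, the diagonal entries of D are periodic with period d under the cyclic shift). -/
/-- The `M × M` matrix `S` over `ℂ[y]`: `(i,j)`-entry `1` if `j = i+1`,
`y` if `(i,j) = (M,1)` (in 1-based indexing), `0` otherwise. -/
noncomputable def Smat (M : ℕ) : Matrix (Fin M) (Fin M) (Polynomial ℂ) :=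
  Matrix.of fun i j =>
    if (j : ℕ) = (i : ℕ) + 1 then 1
    else if (i : ℕ) = M - 1 ∧ (j : ℕ) = 0 then Polynomial.X else 0

/-- `W(β)`: the set of `M × M` matrices over `ℂ[y]` of the form
`X = L_N ⋯ L_2 L_1` with `L_n = diag(V_{n,1},…,V_{n,M}) + S` and
`∏_m V_{n,m} = β` for every `n`. -/
def Wset (M N : ℕ) (β : ℂ) : Set (Matrix (Fin M) (Fin M) (Polynomial ℂ)) :=
  { X | ∃ V : ℕ → Fin M → ℂ, (∀ n, ∏ m, V n m = β) ∧
      X = (((List.range N).map fun k =>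
        Matrix.diagonal (fun m => Polynomial.C (V (N - k) m)) + Smat M).prod) }

open Polynomial Matrix

section Auxiliary

lemma Smat_apply (M : ℕ) (i j : Fin M) :
    Smat M i j = if (j : ℕ) = ((i : ℕ) + 1) % M then X ^ (((i : ℕ) + 1) / M) else 0 := by
  have hi := i.isLt
  have hj := j.isLt
  rcases Nat.lt_or_ge ((i : ℕ) + 1) M with h | h
  · have h1 : ((i : ℕ) + 1) % M = (i : ℕ) + 1 := Nat.mod_eq_of_lt h
    have h2 : ((i : ℕ) + 1) / M = 0 := Nat.div_eq_of_lt h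
    have h3 : ¬ ((i : ℕ) = M - 1) := by omega
    simp [Smat, h1, h2, h3]
  · have hM : 0 < M := by omega
    have hiM : (i : ℕ) + 1 = M := by omega
    have h1 : ((i : ℕ) + 1) % M = 0 := by rw [hiM, Nat.mod_self]
    have h2 : ((i : ℕ) + 1) / M = 1 := by rw [hiM, Nat.div_self hM]
    have h3 : ¬ ((j : ℕ) = (i : ℕ) + 1) := by omega
    have h4 : (i : ℕ) = M - 1 := by omega
    rw [Smat]
    simp only [Matrix.of_apply, h1, h2, pow_one, if_neg h3]
    by_cases hj0 : (j : ℕ) = 0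
    · simp [h4, hj0]
    · simp [hj0]

lemma Spow (M : ℕ) (hM : 0 < M) (k : ℕ) :
    Smat M ^ k = Matrix.of fun (i j : Fin M) =>
      if (j : ℕ) = ((i : ℕ) + k) % M then X ^ (((i : ℕ) + k) / M) else 0 := by
  induction k with
  | zero =>
      refine Matrix.ext (fun i j => ?_)
      simp [Matrix.one_apply, Matrix.of_apply, Nat.mod_eq_of_lt i.isLt,
        Nat.div_eq_of_lt i.isLt, Fin.ext_iff, eq_comm]
  | succ k ih =>
      refine Matrix.ext (fun i j => ?_)
      rw [pow_succ, ih, Matrix.mul_apply]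
      set c : Fin M := ⟨((i : ℕ) + k) % M, Nat.mod_lt _ hM⟩ with hc
      simp only [Matrix.of_apply]
      rw [Finset.sum_eq_single c (fun l _ hl => by
        have hne : ¬ ((l : ℕ) = ((i : ℕ) + k) % M) := fun h => hl (Fin.ext h)
        simp [hne]) (by simp)]
      have hcc : ((c : ℕ) = ((i : ℕ) + k) % M) := rfl
      rw [if_pos hcc, Smat_apply]
      have hkey : ((c : ℕ) + 1) % M = ((i : ℕ) + (k+1)) % M ∧
          ((i : ℕ) + k) / M + ((c : ℕ) + 1) / M = ((i : ℕ) + (k+1)) / M := by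
        have hdm := Nat.div_add_mod ((i : ℕ) + k) M
        set q := ((i : ℕ) + k) / M
        set r := ((i : ℕ) + k) % M
        have hr : r < M := Nat.mod_lt _ hM
        rcases Nat.lt_or_ge (r + 1) M with h | h
        · have e1 : (i : ℕ) + (k+1) = (r + 1) + M * q := by omega
          constructor
          · rw [hcc, e1, Nat.add_mul_mod_self_left, Nat.mod_eq_of_lt h]
          · rw [hcc, e1, Nat.add_mul_div_left _ _ hM, Nat.div_eq_of_lt h]
            omega
        · have hrM : r + 1 = M := by omega
          have hq : M * (q + 1) = M * q + M := by ring
          have e1 : (i : ℕ) + (k+1) = 0 + M * (q + 1) := by omega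
          constructor
          · rw [hcc, e1, Nat.add_mul_mod_self_left, hrM, Nat.mod_self]
            simp
          · rw [hcc, e1, Nat.add_mul_div_left _ _ hM, hrM, Nat.div_self hM]
            simp
      rw [← hkey.1]
      by_cases hj : (j : ℕ) = ((c : ℕ) + 1) % M
      · rw [if_pos hj, if_pos hj, ← pow_add, hkey.2]
      · rw [if_neg hj, if_neg hj, mul_zero]

/-- One elementary factor `diag(v) + S`. -/
noncomputable def Lfac (M : ℕ) (v : Fin M → ℂ) : Matrix (Fin M) (Fin M) (Polynomial ℂ) :=
  Matrix.diagonal (fun m => C (v m)) + Smat M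

lemma Smat_mul_apply (M : ℕ) (hM : 0 < M) (Q : Matrix (Fin M) (Fin M) (Polynomial ℂ))
    (i j : Fin M) :
    (Smat M * Q) i j
      = X ^ (((i : ℕ) + 1) / M) * Q ⟨((i : ℕ) + 1) % M, Nat.mod_lt _ hM⟩ j := by
  rw [Matrix.mul_apply]
  set c : Fin M := ⟨((i : ℕ) + 1) % M, Nat.mod_lt _ hM⟩
  rw [Finset.sum_eq_single c (fun l _ hl => by
    have hne : ¬ ((l : ℕ) = ((i : ℕ) + 1) % M) := fun h => hl (Fin.ext h)
    rw [Smat_apply, if_neg hne, zero_mul]) (by simp)]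
  rw [Smat_apply, if_pos rfl]

lemma Lfac_mul_apply (M : ℕ) (hM : 0 < M) (v : Fin M → ℂ)
    (Q : Matrix (Fin M) (Fin M) (Polynomial ℂ)) (i j : Fin M) :
    (Lfac M v * Q) i j
      = C (v i) * Q i j
        + X ^ (((i : ℕ) + 1) / M) * Q ⟨((i : ℕ) + 1) % M, Nat.mod_lt _ hM⟩ j := by
  rw [Lfac, Matrix.add_mul, Matrix.add_apply, Matrix.diagonal_mul, Smat_mul_apply M hM]

/-- Combined coefficient-structure invariant for products of `Lfac` factors. -/
lemma prod_invariant (M : ℕ) (hM : 0 < M) (L : List (Fin M → ℂ)) :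
    (∀ i j : Fin M, ∀ t : ℕ, (i : ℕ) + L.length < (j : ℕ) + M * t →
        (((L.map (Lfac M)).prod) i j).coeff t = 0)
    ∧ (∀ i : Fin M,
        (((L.map (Lfac M)).prod) i ⟨((i : ℕ) + L.length) % M, Nat.mod_lt _ hM⟩).coeff
          (((i : ℕ) + L.length) / M) = 1) := by
  induction L with
  | nil =>
      constructor
      · intro i j t ht
        simp only [List.map_nil, List.prod_nil, List.length_nil] at *
        by_cases hij : i = j
        · subst hij
          have ht0 : t ≠ 0 := by rintro rfl; simp at ht
          rw [Matrix.one_apply_eq]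
          simp [Polynomial.coeff_one, ht0]
        · rw [Matrix.one_apply_ne hij]
          simp
      · intro i
        simp only [List.map_nil, List.prod_nil, List.length_nil]
        have h1 : ((i : ℕ) + 0) % M = (i : ℕ) := by
          rw [Nat.add_zero]; exact Nat.mod_eq_of_lt i.isLt
        have h2 : ((i : ℕ) + 0) / M = 0 := by
          rw [Nat.add_zero]; exact Nat.div_eq_of_lt i.isLt
        have : (⟨((i : ℕ) + 0) % M, Nat.mod_lt _ hM⟩ : Fin M) = i := Fin.ext h1
        rw [this, h2, Matrix.one_apply_eq, Polynomial.coeff_one]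
        simp
  | cons v L ih =>
      obtain ⟨ihB, ihC⟩ := ih
      have hlen : (v :: L).length = L.length + 1 := rfl
      set n := L.length
      set Q := (L.map (Lfac M)).prod with hQ
      have hprod : ((v :: L).map (Lfac M)).prod = Lfac M v * Q := by
        simp [hQ]
      constructor
      · intro i j t ht
        rw [hlen] at ht
        rw [hprod, Lfac_mul_apply M hM, Polynomial.coeff_add, Polynomial.coeff_C_mul]
        set c : Fin M := ⟨((i : ℕ) + 1) % M, Nat.mod_lt _ hM⟩ with hc
        set s := ((i : ℕ) + 1) / M with hs
        have hcs : (c : ℕ) + M * s = (i : ℕ) + 1 := by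
          rw [hc, hs]; exact Nat.mod_add_div _ _
        have hB1 : (Q i j).coeff t = 0 := by
          apply ihB; omega
        rw [hB1, mul_zero, zero_add]
        rw [mul_comm, Polynomial.coeff_mul_X_pow']
        by_cases hst : s ≤ t
        · rw [if_pos hst]
          apply ihB
          have hMt : M * t = M * (t - s) + M * s := by
            rw [← Nat.mul_add]; congr 1; omega
          omega
        · rw [if_neg hst]
      · intro i
        rw [hlen, hprod, Lfac_mul_apply M hM, Polynomial.coeff_add,
          Polynomial.coeff_C_mul]
        set c : Fin M := ⟨((i : ℕ) + 1) % M, Nat.mod_lt _ hM⟩ with hc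
        set s := ((i : ℕ) + 1) / M with hs
        have hcs : (c : ℕ) + M * s = (i : ℕ) + 1 := by
          rw [hc, hs]; exact Nat.mod_add_div _ _
        set j : Fin M := ⟨((i : ℕ) + (n + 1)) % M, Nat.mod_lt _ hM⟩ with hj
        set t := ((i : ℕ) + (n + 1)) / M with hts
        have hjt : (j : ℕ) + M * t = (i : ℕ) + (n + 1) := by
          rw [hj, hts]; exact Nat.mod_add_div _ _
        have hB1 : (Q i j).coeff t = 0 := by apply ihB; omega
        rw [hB1, mul_zero, zero_add, mul_comm, Polynomial.coeff_mul_X_pow']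
        have hst : s ≤ t := by
          have h1 : M * s ≤ (i : ℕ) + 1 := by omega
          have h2 : (i : ℕ) + (n + 1) < M * (t + 1) := by
            have : M * (t+1) = M * t + M := by ring
            have hjM : (j : ℕ) < M := j.isLt
            omega
          by_contra hcon
          have : t + 1 ≤ s := by omega
          have := Nat.mul_le_mul_left M this
          omega
        rw [if_pos hst]
        have hkey : (c : ℕ) + n = (j : ℕ) + M * (t - s) := by
          have hMts : M * (t - s) = M * t - M * s := by
            rw [Nat.mul_sub]
          have hle : M * s ≤ M * t := Nat.mul_le_mul_left M hst
          omega
        have hmod : ((c : ℕ) + n) % M = (j : ℕ) := by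
          rw [hkey, Nat.add_mul_mod_self_left]
          exact Nat.mod_eq_of_lt j.isLt
        have hdiv : ((c : ℕ) + n) / M = t - s := by
          rw [hkey, Nat.add_mul_div_left _ _ hM, Nat.div_eq_of_lt j.isLt,
            Nat.zero_add]
        have := ihC c
        have hjj : (⟨((c : ℕ) + n) % M, Nat.mod_lt _ hM⟩ : Fin M) = j := Fin.ext hmod
        rw [hjj, hdiv] at this
        exact this

/-- Telescoping product. -/
lemma telescope {R : Type*} [CommRing R] {m : Type*} [Fintype m] [DecidableEq m]
    (G Ginv F : ℕ → Matrix m m R) (hG : ∀ k, Ginv k * G k = 1) (n : ℕ) :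
    ((List.range n).map (fun k => G k * F k * Ginv (k+1))).prod
      = G 0 * ((List.range n).map F).prod * Ginv n := by
  induction n with
  | zero =>
      simp [Matrix.mul_one]
      exact (mul_eq_one_comm.mp (hG 0)).symm
  | succ n ih =>
      rw [List.range_succ, List.map_append, List.map_append, List.prod_append,
        List.prod_append, ih]
      simp only [List.map_cons, List.map_nil, List.prod_cons, List.prod_nil,
        Matrix.mul_one]
      have : G 0 * (List.map F (List.range n)).prod * Ginv n * (G n * F n * Ginv (n+1))
          = G 0 * ((List.map F (List.range n)).prod * ((Ginv n * G n) * (F n * Ginv (n+1))))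
            := by
        simp only [Matrix.mul_assoc]
      rw [this, hG n]
      simp only [Matrix.one_mul, Matrix.mul_assoc]

/-- Iterating a cyclic-shift invariance. -/
lemma shift_iterate {α : Type*} (M : ℕ) (hM : 0 < M) (d : Fin M → α) (k : ℕ)
    (h : ∀ i : Fin M, d ⟨((i : ℕ) + k) % M, Nat.mod_lt _ hM⟩ = d i) (a : ℕ) :
    ∀ i : Fin M, d ⟨((i : ℕ) + a * k) % M, Nat.mod_lt _ hM⟩ = d i := by
  induction a with
  | zero =>
      intro i
      have : (⟨((i : ℕ) + 0 * k) % M, Nat.mod_lt _ hM⟩ : Fin M) = i := by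
        apply Fin.ext
        simp [Nat.mod_eq_of_lt i.isLt]
      rw [this]
  | succ a ih =>
      intro i
      set c : Fin M := ⟨((i : ℕ) + a * k) % M, Nat.mod_lt _ hM⟩ with hcdef
      have e1 : ((i : ℕ) + (a+1) * k) % M = ((c : ℕ) + k) % M := by
        have : ((c : ℕ) + k) % M = ((i : ℕ) + a * k + k) % M := by
          rw [hcdef, Nat.mod_add_mod]
        rw [this]
        congr 1
        ring
      have e2 : (⟨((i : ℕ) + (a+1) * k) % M, Nat.mod_lt _ hM⟩ : Fin M)
          = ⟨((c : ℕ) + k) % M, Nat.mod_lt _ hM⟩ := Fin.ext e1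
      rw [e2, h c]
      exact ih i

/-- Shift invariance only depends on the shift modulo `M`. -/
lemma shift_congr {α : Type*} (M : ℕ) (hM : 0 < M) (d : Fin M → α) (k k' : ℕ)
    (hkk : k % M = k' % M)
    (h : ∀ i : Fin M, d ⟨((i : ℕ) + k) % M, Nat.mod_lt _ hM⟩ = d i) :
    ∀ i : Fin M, d ⟨((i : ℕ) + k') % M, Nat.mod_lt _ hM⟩ = d i := by
  intro i
  have : ((i : ℕ) + k') % M = ((i : ℕ) + k) % M := by
    rw [Nat.add_mod, ← hkk, ← Nat.add_mod]
  rw [show (⟨((i : ℕ) + k') % M, Nat.mod_lt _ hM⟩ : Fin M)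
      = ⟨((i : ℕ) + k) % M, Nat.mod_lt _ hM⟩ from Fin.ext this]
  exact h i

/-- Bézout: some multiple of `N` is congruent to `gcd N M` mod `M`. -/
lemma exists_mul_mod (N M : ℕ) (hM : 0 < M) :
    ∃ a : ℕ, (a * N) % M = (Nat.gcd N M) % M := by
  have hb := Nat.gcd_eq_gcd_ab N M
  set x := Nat.gcdA N M
  set y := Nat.gcdB N M
  refine ⟨(x % (M : ℤ)).toNat, ?_⟩
  have hMz : (0 : ℤ) < (M : ℤ) := by exact_mod_cast hM
  have hnn : 0 ≤ x % (M : ℤ) := Int.emod_nonneg x (by omega)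
  have hcast : ((x % (M : ℤ)).toNat : ℤ) = x % (M : ℤ) := Int.toNat_of_nonneg hnn
  have : (((x % (M : ℤ)).toNat * N : ℕ) : ℤ) % (M : ℤ) = ((Nat.gcd N M : ℕ) : ℤ) % (M : ℤ) := by
    push_cast
    rw [hcast]
    conv_lhs => rw [Int.mul_emod, Int.emod_emod_of_dvd _ (dvd_refl _)]
    rw [← Int.mul_emod]
    rw [hb]
    rw [Int.add_mul_emod_self_left, mul_comm]
  have := congrArg Int.toNat this
  rwa [← Int.natCast_mod, ← Int.natCast_mod, Int.toNat_natCast, Int.toNat_natCast] at this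

/-- Commuting with `S^k` is shift-periodicity of the diagonal. -/
lemma commute_iff (M : ℕ) (hM : 0 < M) (d : Fin M → ℂ) (k : ℕ) :
    (Smat M ^ k * Matrix.diagonal (fun m => C (d m))
        = Matrix.diagonal (fun m => C (d m)) * Smat M ^ k)
      ↔ ∀ i : Fin M, d ⟨((i : ℕ) + k) % M, Nat.mod_lt _ hM⟩ = d i := by
  rw [Spow M hM k]
  constructor
  · intro h i
    set j : Fin M := ⟨((i : ℕ) + k) % M, Nat.mod_lt _ hM⟩ with hj
    have := congrFun (congrFun h i) j
    rw [Matrix.mul_diagonal, Matrix.diagonal_mul, Matrix.of_apply, if_pos rfl] at this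
    rw [mul_comm] at this
    have hco := congrArg (fun p => p.coeff (((i : ℕ) + k) / M)) this
    simp only [Polynomial.coeff_C_mul, Polynomial.coeff_X_pow, if_pos rfl,
      mul_one] at hco
    simpa using hco
  · intro h
    refine Matrix.ext (fun i j => ?_)
    rw [Matrix.mul_diagonal, Matrix.diagonal_mul, Matrix.of_apply]
    by_cases hij : (j : ℕ) = ((i : ℕ) + k) % M
    · rw [if_pos hij]
      have : d j = d i := by
        have := h i
        rwa [show (⟨((i : ℕ) + k) % M, Nat.mod_lt _ hM⟩ : Fin M) = j from
          Fin.ext hij.symm] at this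
      rw [this, mul_comm]
    · rw [if_neg hij, zero_mul, mul_zero]

/-- `diag a * S * diag b = S` when `a i * b ((i+1)%M) = 1`. -/
lemma diag_S_diag (M : ℕ) (hM : 0 < M) (a b : Fin M → ℂ)
    (h : ∀ i : Fin M, a i * b ⟨((i : ℕ) + 1) % M, Nat.mod_lt _ hM⟩ = 1) :
    Matrix.diagonal (fun m => C (a m)) * Smat M * Matrix.diagonal (fun m => C (b m))
      = Smat M := by
  refine Matrix.ext (fun i j => ?_)
  rw [Matrix.mul_diagonal, Matrix.diagonal_mul, Smat_apply]
  by_cases hij : (j : ℕ) = ((i : ℕ) + 1) % M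
  · rw [if_pos hij]
    have hj : j = ⟨((i : ℕ) + 1) % M, Nat.mod_lt _ hM⟩ := Fin.ext hij
    have hab : a i * b j = 1 := by rw [hj]; exact h i
    have : C (a i) * X ^ (((i : ℕ) + 1) / M) * C (b j)
        = C (a i * b j) * X ^ (((i : ℕ) + 1) / M) := by
      rw [Polynomial.C_mul]; ring
    rw [this, hab, Polynomial.C_1, one_mul]
  · rw [if_neg hij]
    simp

/-- Products over `Fin M` are invariant under a cyclic shift of the index. -/
lemma prod_shift (M : ℕ) (hM : 0 < M) (f : Fin M → ℂ) (s : ℕ) :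
    (∏ m : Fin M, f ⟨((m : ℕ) + s) % M, Nat.mod_lt _ hM⟩) = ∏ m, f m := by
  have hinj : Function.Injective
      (fun m : Fin M => (⟨((m : ℕ) + s) % M, Nat.mod_lt _ hM⟩ : Fin M)) := by
    intro m m' hmm
    have h1 : ((m : ℕ) + s) % M = ((m' : ℕ) + s) % M := congrArg Fin.val hmm
    have h2 : (m : ℕ) % M = (m' : ℕ) % M :=
      Nat.ModEq.add_right_cancel' s h1
    exact Fin.ext (by rwa [Nat.mod_eq_of_lt m.isLt, Nat.mod_eq_of_lt m'.isLt] at h2)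
  have hbij := (Finite.injective_iff_bijective).mp hinj
  exact Function.Bijective.prod_comp hbij f

end Auxiliary

/-- Lemma 2.7: for `X ∈ W(β)` and an invertible diagonal matrix `D`,
`D X D⁻¹ ∈ W(β)` iff `S^d D S^{-d} = D` (stated as `S^d D = D S^d`),
where `d = gcd(N, M)`. -/
theorem diagonal_conjugation_mem_Wset_iff (M N : ℕ) (hM : 1 ≤ M) (hN : 1 ≤ N) (β : ℂ)
    (X : Matrix (Fin M) (Fin M) (Polynomial ℂ)) (hX : X ∈ Wset M N β)
    (d : Fin M → ℂ) (hd : ∀ m, d m ≠ 0) :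
    (Matrix.diagonal (fun m => Polynomial.C (d m)) * X *
        Matrix.diagonal (fun m => Polynomial.C (d m)⁻¹) ∈ Wset M N β)
      ↔ Smat M ^ Nat.gcd N M * Matrix.diagonal (fun m => Polynomial.C (d m))
          = Matrix.diagonal (fun m => Polynomial.C (d m)) * Smat M ^ Nat.gcd N M := by
  have hM0 : 0 < M := hM
  set g := Nat.gcd N M with hg
  obtain ⟨V, hV, hXeq⟩ := hX
  have hXL : X = (((List.range N).map (fun k => V (N - k))).map (Lfac M)).prod := by
    rw [hXeq, List.map_map]; rfl
  have hlen : ((List.range N).map (fun k => V (N - k))).length = N := by simp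
  rw [commute_iff M hM0 d g]
  constructor
  · rintro ⟨V', hV', hYeq⟩
    have hYL : Matrix.diagonal (fun m => Polynomial.C (d m)) * X *
          Matrix.diagonal (fun m => Polynomial.C (d m)⁻¹)
        = (((List.range N).map (fun k => V' (N - k))).map (Lfac M)).prod := by
      rw [hYeq, List.map_map]; rfl
    have hlen' : ((List.range N).map (fun k => V' (N - k))).length = N := by simp
    have hNper : ∀ i : Fin M, d ⟨((i : ℕ) + N) % M, Nat.mod_lt _ hM0⟩ = d i := by
      intro i
      set j : Fin M := ⟨((i : ℕ) + N) % M, Nat.mod_lt _ hM0⟩ with hj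
      set t := ((i : ℕ) + N) / M with ht
      have hCX : (X i j).coeff t = 1 := by
        rw [hXL]
        have h2 := (prod_invariant M hM0 ((List.range N).map (fun k => V (N - k)))).2 i
        rw [hlen] at h2
        exact h2
      have hCY : ((Matrix.diagonal (fun m => Polynomial.C (d m)) * X *
          Matrix.diagonal (fun m => Polynomial.C (d m)⁻¹)) i j).coeff t = 1 := by
        rw [hYL]
        have h2 := (prod_invariant M hM0 ((List.range N).map (fun k => V' (N - k)))).2 i
        rw [hlen'] at h2
        exact h2
      have hentry : (Matrix.diagonal (fun m => Polynomial.C (d m)) * X *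
            Matrix.diagonal (fun m => Polynomial.C (d m)⁻¹)) i j
          = C (d i) * X i j * C ((d j)⁻¹) := by
        rw [Matrix.mul_diagonal, Matrix.diagonal_mul]
      rw [hentry] at hCY
      have : d i * (X i j).coeff t * (d j)⁻¹ = 1 := by
        have e : (C (d i) * X i j * C ((d j)⁻¹)).coeff t
            = d i * (X i j).coeff t * (d j)⁻¹ := by
          rw [Polynomial.coeff_mul_C, Polynomial.coeff_C_mul]
        rw [← e, hCY]
      rw [hCX, mul_one] at this
      have : d i = d j := (mul_inv_eq_one₀ (hd j)).mp this
      exact this.symm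
    obtain ⟨a, ha⟩ := exists_mul_mod N M hM0
    have h1 := shift_iterate M hM0 d N hNper a
    exact shift_congr M hM0 d (a * N) g ha h1
  · intro hgper
    have hNper : ∀ i : Fin M, d ⟨((i : ℕ) + N) % M, Nat.mod_lt _ hM0⟩ = d i := by
      obtain ⟨c, hc⟩ : g ∣ N := Nat.gcd_dvd_left N M
      have h1 := shift_iterate M hM0 d g hgper c
      exact shift_congr M hM0 d (c * g) N (by rw [mul_comm, ← hc]) h1
    -- the conjugating diagonals
    set δ : ℕ → Fin M → ℂ :=
      fun k m => d ⟨((m : ℕ) + (N - k)) % M, Nat.mod_lt _ hM0⟩ with hδ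
    set Gm : ℕ → Matrix (Fin M) (Fin M) (Polynomial ℂ) :=
      fun k => Matrix.diagonal (fun m => C (δ k m)) with hGm
    set Gi : ℕ → Matrix (Fin M) (Fin M) (Polynomial ℂ) :=
      fun k => Matrix.diagonal (fun m => C ((δ k m)⁻¹)) with hGi
    have hδne : ∀ k m, δ k m ≠ 0 := fun k m => hd _
    have hGinv : ∀ k, Gi k * Gm k = 1 := by
      intro k
      have hfun : (fun m => C ((δ k m)⁻¹) * C (δ k m)) = fun _ : Fin M => (1 : Polynomial ℂ) := by
        funext m
        rw [← Polynomial.C_mul, inv_mul_cancel₀ (hδne k m), Polynomial.C_1]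
      rw [hGi, hGm, Matrix.diagonal_mul_diagonal, hfun, Matrix.diagonal_one]
    set V' : ℕ → Fin M → ℂ := fun n m =>
      d ⟨((m : ℕ) + n) % M, Nat.mod_lt _ hM0⟩ * V n m *
        (d ⟨((m : ℕ) + (n - 1)) % M, Nat.mod_lt _ hM0⟩)⁻¹ with hV'def
    refine ⟨V', ?_, ?_⟩
    · intro n
      have e1 : (∏ m, V' n m)
          = (∏ m : Fin M, d ⟨((m : ℕ) + n) % M, Nat.mod_lt _ hM0⟩)
            * (∏ m, V n m)
            * (∏ m : Fin M, (d ⟨((m : ℕ) + (n-1)) % M, Nat.mod_lt _ hM0⟩)⁻¹) := by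
        rw [← Finset.prod_mul_distrib, ← Finset.prod_mul_distrib]
      have e2 : (∏ m : Fin M, (d ⟨((m : ℕ) + (n-1)) % M, Nat.mod_lt _ hM0⟩)⁻¹)
          = (∏ m : Fin M, d ⟨((m : ℕ) + (n-1)) % M, Nat.mod_lt _ hM0⟩)⁻¹ := by
        rw [← Finset.prod_inv_distrib]
      rw [e1, e2, prod_shift M hM0 d n, prod_shift M hM0 d (n-1), hV n]
      have hprod_ne : (∏ m, d m) ≠ 0 := Finset.prod_ne_zero_iff.mpr (fun m _ => hd m)
      field_simp
    · -- the matrix identity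
      have hfac : ∀ k ∈ List.range N,
          Gm k * (Matrix.diagonal (fun m => C (V (N - k) m)) + Smat M) * Gi (k+1)
            = Matrix.diagonal (fun m => C (V' (N - k) m)) + Smat M := by
        intro k hk
        have hkN : k < N := List.mem_range.mp hk
        rw [Matrix.mul_add, Matrix.add_mul]
        congr 1
        · rw [hGm, hGi, Matrix.diagonal_mul_diagonal, Matrix.diagonal_mul_diagonal]
          have hfun : (fun m => C (δ k m) * C (V (N - k) m) * C ((δ (k+1) m)⁻¹))
              = fun m => C (V' (N - k) m) := by
            funext m
            rw [← Polynomial.C_mul, ← Polynomial.C_mul]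
            refine congrArg C ?_
            have h1 : N - (k + 1) = N - k - 1 := by omega
            show δ k m * V (N - k) m * (δ (k+1) m)⁻¹ = _
            rw [hV'def, hδ]
            simp only [h1]
          rw [hfun]
        · rw [hGm, hGi]
          apply diag_S_diag M hM0
          intro i
          have hidx : (((i : ℕ) + 1) % M + (N - (k+1))) % M
              = ((i : ℕ) + (N - k)) % M := by
            rw [Nat.mod_add_mod]
            congr 1
            omega
          have h1 : δ (k+1) ⟨((i : ℕ) + 1) % M, Nat.mod_lt _ hM0⟩ = δ k i := by
            rw [hδ]
            exact congrArg d (Fin.ext hidx)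
          rw [h1, mul_inv_cancel₀ (hδne k i)]
      have htel := telescope Gm Gi
        (fun k => Matrix.diagonal (fun m => C (V (N - k) m)) + Smat M) hGinv N
      have hG0 : Gm 0 = Matrix.diagonal (fun m => Polynomial.C (d m)) := by
        rw [hGm]
        refine congrArg Matrix.diagonal (funext fun m => congrArg C ?_)
        show d ⟨((m : ℕ) + (N - 0)) % M, Nat.mod_lt _ hM0⟩ = d m
        rw [show N - 0 = N from rfl]
        exact hNper m
      have hGN : Gi N = Matrix.diagonal (fun m => Polynomial.C (d m)⁻¹) := by
        rw [hGi]
        refine congrArg Matrix.diagonal (funext fun m => ?_)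
        have h0 : ((m : ℕ) + (N - N)) % M = (m : ℕ) := by
          rw [Nat.sub_self, Nat.add_zero]
          exact Nat.mod_eq_of_lt m.isLt
        show C ((d ⟨((m : ℕ) + (N - N)) % M, Nat.mod_lt _ hM0⟩)⁻¹) = C ((d m)⁻¹)
        exact congrArg (fun z => C z⁻¹) (congrArg d (Fin.ext h0))
      calc Matrix.diagonal (fun m => Polynomial.C (d m)) * X *
            Matrix.diagonal (fun m => Polynomial.C (d m)⁻¹)
          = Gm 0 * (((List.range N).map
              (fun k => Matrix.diagonal (fun m => C (V (N - k) m)) + Smat M)).prod)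
              * Gi N := by rw [hG0, hGN, hXeq]
        _ = ((List.range N).map (fun k => Gm k *
              (Matrix.diagonal (fun m => C (V (N - k) m)) + Smat M) * Gi (k+1))).prod := by
            rw [htel]
        _ = ((List.range N).map
              (fun k => Matrix.diagonal (fun m => C (V' (N - k) m)) + Smat M)).prod := by
            congr 1
            exact List.map_congr_left hfac
end

section
/- Let M, N ≥ 1, β ∈ ℂ, α ∈ ℂ with α ≠ 0, and let X(y) ∈ W(β). Set X_α := X((−1)^M α), the constant M×M matrix obtained by substituting y = (−1)^M α. Suppose μ = (μ_1, …, μ_M)ᵀ ∈ ℂ^M has all components nonzero and satisfies X_α μ = κ μ for some κ ∈ ℂ. Define I_m := −μ_{m+1}/μ_m for 1 ≤ m ≤ M−1, I_M := −(−1)^M α μ_1 / μ_M, and R(y) := diag(I_1, …, I_M) + S. Then ∏_{m=1}^M I_m = α, the matrix R(y) is invertible over the field ℂ(y), and X' := R X R^{−1} (computed over ℂ(y)) has all entries in ℂ[y] and can be written X' = S^N + ∑_{k=0}^{N−1} Z_k S^k with constant diagonal matrices Z_k; in particular X' R = R X. Consequently, if X_α has M distinct eigenvalues each admitting an eigenvector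 with all components nonzero, then there exist M distinct pairs (R^{(i)}, X^{(i)}) with R^{(i)} = diag(I^{(i)}_1,…,I^{(i)}_M) + S, ∏_m I^{(i)}_m = α, and X^{(i)} R^{(i)} = R^{(i)} X. -/
/-!
Matrices of the form `∑ k < n, D(v_k) S^k` with constant diagonal `D(v_k) = diagC M v_k`
behave like a skew polynomial ring in `S`, because `S D(v) = D(v(· + 1)) S`. Every element of
`W(β)` is monic of degree `N` there, and right division by the monic linear `R = D(I) + S` gives
`R X = X' R + D(r)` with `X'` monic of degree `N` and a constant diagonal remainder `D(r)`.
The `I_m` are chosen so that `R((-1)^M α) μ = 0`; evaluating at `y = (-1)^M α` and applying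
both sides to `μ` gives `D(r) μ = 0`, so `r = 0`. Finally `det R(0) = ∏ I_m = α ≠ 0` because
`R(0)` is upper triangular, and `R` determines `μ` up to a scalar, hence also its eigenvalue.
-/

open Polynomial Matrix Fin.NatCast

section FinAddOne

variable {M : ℕ} [NeZero M]

lemma Fin.val_add_one_eq_ite (i : Fin M) :
    ((i + 1 : Fin M) : ℕ) = if (i : ℕ) = M - 1 then 0 else (i : ℕ) + 1 := by
  obtain ⟨n, rfl⟩ := Nat.exists_eq_add_one_of_ne_zero (NeZero.ne M)
  rw [Fin.val_add_one]
  simp [Fin.ext_iff]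

lemma Fin.eq_add_one_iff (i j : Fin M) :
    j = i + 1 ↔ (j : ℕ) = i + 1 ∨ (i : ℕ) = M - 1 ∧ (j : ℕ) = 0 := by
  rw [Fin.ext_iff, Fin.val_add_one_eq_ite]
  have := j.isLt
  split_ifs <;> omega

lemma Fin.apply_eq_apply_zero_of_apply_add_one {α : Type*} {f : Fin M → α}
    (h : ∀ m, f (m + 1) = f m) (m : Fin M) : f m = f 0 := by
  have hcast : ∀ k : ℕ, f k = f 0 := by
    intro k
    induction k with
    | zero => rw [Nat.cast_zero]
    | succ k ih => rw [Nat.cast_succ, h, ih]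
  simpa using hcast m

end FinAddOne

noncomputable def diagC (M : ℕ) : (Fin M → ℂ) →+* Matrix (Fin M) (Fin M) ℂ[X] :=
  (C : ℂ →+* ℂ[X]).mapMatrix.comp (diagonalRingHom (Fin M) ℂ)

section diagC

variable {M : ℕ}

lemma diagC_apply (v : Fin M → ℂ) : diagC M v = diagonal fun m => C (v m) :=
  diagonal_map (f := C) (d := v) (map_zero _)

lemma diagC_injective : Function.Injective (diagC M) := by
  intro v w h
  funext m
  simpa [diagC_apply] using congr_fun₂ h m m

lemma diagC_map_eval (t : ℂ) (v : Fin M → ℂ) : (diagC M v).map (eval t) = diagonal v := by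
  rw [diagC_apply, diagonal_map eval_zero]
  simp

end diagC

def cornerWeight (M : ℕ) (t : ℂ) (m : Fin M) : ℂ := if (m : ℕ) = M - 1 then t else 1

section Smat

variable {M : ℕ} [NeZero M]

lemma Smat_apply_of_ne {i j : Fin M} (h : j ≠ i + 1) : Smat M i j = 0 := by
  rw [Ne, Fin.eq_add_one_iff, not_or] at h
  simp only [Smat, of_apply, if_neg h.1, if_neg h.2]

lemma eval_Smat_apply_add_one (t : ℂ) (i : Fin M) :
    (Smat M i (i + 1)).eval t = cornerWeight M t i := by
  have := i.isLt
  simp only [Smat, of_apply, cornerWeight, Fin.val_add_one_eq_ite]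
  split_ifs <;> simp_all

lemma Smat_mul_diagC (v : Fin M → ℂ) :
    Smat M * diagC M v = diagC M (fun m => v (m + 1)) * Smat M := by
  ext i j
  rw [diagC_apply, diagC_apply, mul_diagonal, diagonal_mul]
  by_cases h : j = i + 1
  · rw [h, mul_comm]
  · rw [Smat_apply_of_ne h, zero_mul, mul_zero]

lemma Smat_pow_mul_diagC (k : ℕ) (v : Fin M → ℂ) :
    Smat M ^ k * diagC M v = diagC M (fun m => v (m + k)) * Smat M ^ k := by
  induction k generalizing v with
  | zero => simp
  | succ k ih =>
    rw [pow_succ, mul_assoc, Smat_mul_diagC, ← mul_assoc, ih, mul_assoc]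
    simp only [Nat.cast_succ, add_assoc]

lemma Smat_map_eval_mulVec (t : ℂ) (w : Fin M → ℂ) :
    (Smat M).map (eval t) *ᵥ w = fun m => cornerWeight M t m * w (m + 1) := by
  funext m
  rw [mulVec, dotProduct, Finset.sum_eq_single (m + 1)]
  · rw [map_apply, eval_Smat_apply_add_one]
  · intro j _ hj
    rw [map_apply, Smat_apply_of_ne hj, eval_zero, zero_mul]
  · exact fun h => absurd (Finset.mem_univ _) h

end Smat

noncomputable def skewDegreeLT (M n : ℕ) : AddSubgroup (Matrix (Fin M) (Fin M) ℂ[X]) :=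
  AddSubgroup.closure {A | ∃ v : Fin M → ℂ, ∃ k < n, A = diagC M v * Smat M ^ k}

section skewDegreeLT

variable {M n : ℕ}

lemma diagC_mul_Smat_pow_mem {k : ℕ} (hk : k < n) (v : Fin M → ℂ) :
    diagC M v * Smat M ^ k ∈ skewDegreeLT M n :=
  AddSubgroup.subset_closure ⟨v, k, hk, rfl⟩

lemma map_mem_skewDegreeLT {n' : ℕ}
    (f : Matrix (Fin M) (Fin M) ℂ[X] →+ Matrix (Fin M) (Fin M) ℂ[X])
    (hf : ∀ v, ∀ k < n, f (diagC M v * Smat M ^ k) ∈ skewDegreeLT M n')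
    {A : Matrix (Fin M) (Fin M) ℂ[X]} (hA : A ∈ skewDegreeLT M n) : f A ∈ skewDegreeLT M n' :=
  (AddSubgroup.closure_le ((skewDegreeLT M n').comap f)).2
    (by rintro _ ⟨v, k, hk, rfl⟩; exact hf v k hk) hA

lemma exists_eq_sum_of_mem_skewDegreeLT {A : Matrix (Fin M) (Fin M) ℂ[X]}
    (hA : A ∈ skewDegreeLT M n) :
    ∃ z : Fin n → Fin M → ℂ, A = ∑ k : Fin n, diagC M (z k) * Smat M ^ (k : ℕ) := by
  induction hA using AddSubgroup.closure_induction with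
  | mem _ h =>
    obtain ⟨v, k, hk, rfl⟩ := h
    refine ⟨Pi.single ⟨k, hk⟩ v, ?_⟩
    rw [Finset.sum_eq_single ⟨k, hk⟩ (fun j _ hj => by simp [hj]) (by simp)]
    simp
  | zero => exact ⟨0, by simp⟩
  | add _ _ _ _ h₁ h₂ =>
    obtain ⟨z₁, rfl⟩ := h₁
    obtain ⟨z₂, rfl⟩ := h₂
    exact ⟨z₁ + z₂, by simp [add_mul, Finset.sum_add_distrib]⟩
  | neg _ _ h =>
    obtain ⟨z, rfl⟩ := h
    exact ⟨-z, by simp [neg_mul]⟩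

variable [NeZero M]

lemma diagC_add_Smat_mul_mem (v : Fin M → ℂ) {A : Matrix (Fin M) (Fin M) ℂ[X]}
    (hA : A ∈ skewDegreeLT M n) : (diagC M v + Smat M) * A ∈ skewDegreeLT M (n + 1) := by
  refine map_mem_skewDegreeLT (AddMonoidHom.mulLeft _) (fun w k hk => ?_) hA
  rw [AddMonoidHom.coe_mulLeft, add_mul, ← mul_assoc, ← mul_assoc, ← map_mul,
    Smat_mul_diagC, mul_assoc, ← pow_succ']
  exact add_mem (diagC_mul_Smat_pow_mem (by omega) _) (diagC_mul_Smat_pow_mem (by omega) _)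

lemma list_prod_sub_Smat_pow_mem (l : List (Fin M → ℂ)) :
    (l.map fun v => diagC M v + Smat M).prod - Smat M ^ l.length ∈ skewDegreeLT M l.length := by
  induction l with
  | nil => simp
  | cons v l ih =>
    rw [List.map_cons, List.prod_cons, List.length_cons]
    generalize (l.map fun v => diagC M v + Smat M).prod = P at ih
    have h : (diagC M v + Smat M) * P - Smat M ^ (l.length + 1)
        = (diagC M v + Smat M) * (P - Smat M ^ l.length) + diagC M v * Smat M ^ l.length := by
      rw [pow_succ']; noncomm_ring
    rw [h]
    exact add_mem (diagC_add_Smat_mul_mem v ih) (diagC_mul_Smat_pow_mem (by omega) v)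

lemma sub_Smat_pow_mem_of_mem_Wset {N : ℕ} {β : ℂ} {X : Matrix (Fin M) (Fin M) ℂ[X]}
    (hX : X ∈ Wset M N β) : X - Smat M ^ N ∈ skewDegreeLT M N := by
  obtain ⟨V, -, rfl⟩ := hX
  have hl : (List.range N).map (fun k => diagonal (fun m => C (V (N - k) m)) + Smat M)
      = ((List.range N).map fun k => V (N - k)).map fun v => diagC M v + Smat M := by
    simp only [List.map_map, Function.comp_def, diagC_apply]
  simpa only [hl, List.length_map, List.length_range] using
    list_prod_sub_Smat_pow_mem ((List.range N).map fun k => V (N - k))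

lemma exists_diagC_mul_Smat_pow_eq_mul_add (I v : Fin M → ℂ) {k : ℕ} (hk : k ≤ n) :
    ∃ Q ∈ skewDegreeLT M n, ∃ r,
      diagC M v * Smat M ^ k = Q * (diagC M I + Smat M) + diagC M r := by
  induction k generalizing v with
  | zero => exact ⟨0, zero_mem _, v, by simp⟩
  | succ j ih =>
    obtain ⟨Q, hQ, r, h⟩ := ih (fun m => v m * I (m + j)) (by omega)
    refine ⟨diagC M v * Smat M ^ j - Q, sub_mem (diagC_mul_Smat_pow_mem (by omega) v) hQ, -r,
      ?_⟩
    have hj : diagC M v * Smat M ^ (j + 1)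
        = diagC M v * Smat M ^ j * (diagC M I + Smat M)
          - diagC M (fun m => v m * I (m + j)) * Smat M ^ j := by
      calc diagC M v * Smat M ^ (j + 1)
          = diagC M v * Smat M ^ j * (diagC M I + Smat M)
            - diagC M v * (Smat M ^ j * diagC M I) := by rw [pow_succ]; noncomm_ring
        _ = _ := by rw [Smat_pow_mul_diagC, ← mul_assoc, ← map_mul]; rfl
    rw [hj, h, map_neg, sub_mul]
    abel

lemma exists_eq_mul_add_diagC (I : Fin M → ℂ) {P : Matrix (Fin M) (Fin M) ℂ[X]}
    (hP : P ∈ skewDegreeLT M (n + 1)) :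
    ∃ Q ∈ skewDegreeLT M n, ∃ r, P = Q * (diagC M I + Smat M) + diagC M r := by
  induction hP using AddSubgroup.closure_induction with
  | mem _ h =>
    obtain ⟨v, k, hk, rfl⟩ := h
    exact exists_diagC_mul_Smat_pow_eq_mul_add I v (by omega)
  | zero => exact ⟨0, zero_mem _, 0, by simp⟩
  | add _ _ _ _ h₁ h₂ =>
    obtain ⟨Q₁, hQ₁, r₁, rfl⟩ := h₁
    obtain ⟨Q₂, hQ₂, r₂, rfl⟩ := h₂
    exact ⟨Q₁ + Q₂, add_mem hQ₁ hQ₂, r₁ + r₂, by rw [add_mul, map_add]; abel⟩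
  | neg _ _ h =>
    obtain ⟨Q, hQ, r, rfl⟩ := h
    exact ⟨-Q, neg_mem hQ, -r, by rw [neg_mul, map_neg, neg_add]⟩

end skewDegreeLT

lemma eval_zero_Smat_apply_of_le {M : ℕ} {i j : Fin M} (h : j ≤ i) :
    (Smat M i j).eval 0 = 0 := by
  have : (j : ℕ) ≠ i + 1 := by have : (j : ℕ) ≤ i := h; omega
  rw [Smat, of_apply, if_neg this]
  split_ifs <;> simp

lemma eval_zero_det_diagC_add_Smat {M : ℕ} (I : Fin M → ℂ) :
    (diagC M I + Smat M).det.eval 0 = ∏ m, I m := by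
  rw [← coe_evalRingHom, RingHom.map_det, RingHom.mapMatrix_apply, det_of_isUpperTriangular]
  · refine Finset.prod_congr rfl fun i _ => ?_
    simp [diagC_apply, eval_zero_Smat_apply_of_le le_rfl]
  · intro i j (hji : j < i)
    simp [diagC_apply, eval_zero_Smat_apply_of_le hji.le, diagonal_apply_ne _ hji.ne']

lemma map_mul_mul_inv_eq_map {A K n : Type*} [CommRing A] [Field K] [Fintype n] [DecidableEq n]
    (φ : A →+* K) (hφ : Function.Injective φ) {R X Y : Matrix n n A} (hR : R.det ≠ 0)
    (h : Y * R = R * X) : R.map φ * X.map φ * (R.map φ)⁻¹ = Y.map φ := by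
  have hu : IsUnit (R.map φ).det := by
    rw [← RingHom.mapMatrix_apply, ← RingHom.map_det]
    exact ((map_ne_zero_iff φ hφ).2 hR).isUnit
  rw [← Matrix.map_mul, ← h, Matrix.map_mul, mul_nonsing_inv_cancel_right _ _ hu]

noncomputable def ratioDiag (M : ℕ) [NeZero M] (t : ℂ) (μ : Fin M → ℂ) (m : Fin M) : ℂ :=
  -(cornerWeight M t m * μ (m + 1) / μ m)

section ratioDiag

variable {M : ℕ} {t : ℂ}

lemma cornerWeight_ne_zero (ht : t ≠ 0) (m : Fin M) : cornerWeight M t m ≠ 0 := by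
  unfold cornerWeight
  split_ifs <;> simp [ht]

variable [NeZero M]

lemma prod_cornerWeight (t : ℂ) : ∏ m, cornerWeight M t m = t := by
  have hM := NeZero.pos M
  simp only [cornerWeight]
  rw [Finset.prod_eq_single ⟨M - 1, by omega⟩ (fun m _ hm => if_neg fun h => hm (Fin.ext h))
    (by simp)]
  simp

lemma prod_ratioDiag {μ : Fin M → ℂ} (hμ : ∀ m, μ m ≠ 0) :
    ∏ m, ratioDiag M t μ m = (-1) ^ M * t := by
  have hshift : ∏ m, μ (m + 1) = ∏ m, μ m := Equiv.prod_comp (Equiv.addRight 1) μ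
  apply mul_right_cancel₀ (Finset.prod_ne_zero_iff.2 fun m _ => hμ m)
  calc (∏ m, ratioDiag M t μ m) * ∏ m, μ m
      = ∏ m, (-1) * (cornerWeight M t m * μ (m + 1)) := by
        rw [← Finset.prod_mul_distrib]
        refine Finset.prod_congr rfl fun m _ => ?_
        rw [ratioDiag, neg_mul, div_mul_cancel₀ _ (hμ m), neg_one_mul]
    _ = (-1) ^ M * t * ∏ m, μ m := by
        rw [Finset.prod_mul_distrib, Finset.prod_mul_distrib, Finset.prod_const, Finset.card_univ,
          Fintype.card_fin, prod_cornerWeight, hshift, mul_assoc]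

lemma diagC_ratioDiag_add_Smat_map_eval_mulVec {μ : Fin M → ℂ} (hμ : ∀ m, μ m ≠ 0) :
    (diagC M (ratioDiag M t μ) + Smat M).map (eval t) *ᵥ μ = 0 := by
  rw [Matrix.map_add _ (fun _ _ => eval_add), diagC_map_eval, add_mulVec, Smat_map_eval_mulVec]
  funext m
  rw [Pi.add_apply, mulVec_diagonal, ratioDiag, neg_mul, div_mul_cancel₀ _ (hμ m)]
  simp

lemma eq_smul_of_ratioDiag_eq (ht : t ≠ 0) {u w : Fin M → ℂ} (hu : ∀ m, u m ≠ 0)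
    (hw : ∀ m, w m ≠ 0) (h : ratioDiag M t u = ratioDiag M t w) : ∃ s : ℂ, u = s • w := by
  have hstep : ∀ m, u (m + 1) / w (m + 1) = u m / w m := by
    intro m
    have hm := congr_fun h m
    simp only [ratioDiag, neg_inj, mul_div_assoc] at hm
    have := mul_left_cancel₀ (cornerWeight_ne_zero ht m) hm
    rw [div_eq_div_iff (hu _) (hw _)] at this
    rw [div_eq_div_iff (hw _) (hw _)]
    linear_combination this
  refine ⟨u 0 / w 0, funext fun m => ?_⟩
  rw [Pi.smul_apply, smul_eq_mul,
    ← Fin.apply_eq_apply_zero_of_apply_add_one (f := fun m => u m / w m) hstep m,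
    div_mul_cancel₀ _ (hw m)]

lemma eigenvalue_eq_of_ratioDiag_eq (ht : t ≠ 0) {A : Matrix (Fin M) (Fin M) ℂ}
    {u w : Fin M → ℂ} {κ₁ κ₂ : ℂ} (hu : ∀ m, u m ≠ 0) (hw : ∀ m, w m ≠ 0)
    (hAu : A *ᵥ u = κ₁ • u) (hAw : A *ᵥ w = κ₂ • w)
    (h : ratioDiag M t u = ratioDiag M t w) : κ₁ = κ₂ := by
  obtain ⟨s, rfl⟩ := eq_smul_of_ratioDiag_eq ht hu hw h
  rw [mulVec_smul, hAw, smul_comm] at hAu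
  have h0 := congr_fun hAu 0
  simp only [Pi.smul_apply, smul_eq_mul] at h0
  exact (mul_right_cancel₀ (hu 0) h0).symm

end ratioDiag

section Intertwiner

variable {M : ℕ}

lemma eq_zero_of_mul_eq_mul_add_diagC {R X Y : Matrix (Fin M) (Fin M) ℂ[X]} {r μ : Fin M → ℂ}
    {t κ : ℂ} (h : R * X = Y * R + diagC M r) (hR : R.map (eval t) *ᵥ μ = 0)
    (hX : X.map (eval t) *ᵥ μ = κ • μ) (hμ : ∀ m, μ m ≠ 0) : r = 0 := by
  have key := congr_arg (fun A => (evalRingHom t).mapMatrix A *ᵥ μ) h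
  simp only [map_mul, map_add, ← mulVec_mulVec, add_mulVec, RingHom.mapMatrix_apply,
    coe_evalRingHom, hX, hR, mulVec_smul, mulVec_zero, smul_zero, diagC_map_eval,
    zero_add] at key
  funext m
  have hm := congr_fun key m
  rw [mulVec_diagonal, Pi.zero_apply, eq_comm, mul_eq_zero] at hm
  exact hm.resolve_right (hμ m)

variable [NeZero M]

lemma exists_mul_diagC_ratioDiag_add_Smat_eq {N : ℕ} {X : Matrix (Fin M) (Fin M) ℂ[X]}
    (hX : X - Smat M ^ N ∈ skewDegreeLT M N) {t κ : ℂ} {μ : Fin M → ℂ}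
    (hμ : ∀ m, μ m ≠ 0) (hEig : X.map (eval t) *ᵥ μ = κ • μ) :
    ∃ Q ∈ skewDegreeLT M N, (Smat M ^ N + Q) * (diagC M (ratioDiag M t μ) + Smat M)
      = (diagC M (ratioDiag M t μ) + Smat M) * X := by
  set I := ratioDiag M t μ
  have hRX : (diagC M I + Smat M) * X - Smat M ^ N * (diagC M I + Smat M)
      ∈ skewDegreeLT M (N + 1) := by
    have e : (diagC M I + Smat M) * X - Smat M ^ N * (diagC M I + Smat M)
        = (diagC M I + Smat M) * (X - Smat M ^ N)
          + (diagC M I * Smat M ^ N - Smat M ^ N * diagC M I) := by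
      rw [mul_sub, add_mul _ _ (Smat M ^ N), mul_add (Smat M ^ N), ← pow_succ, ← pow_succ']
      abel
    rw [e, Smat_pow_mul_diagC]
    exact add_mem (diagC_add_Smat_mul_mem I hX)
      (sub_mem (diagC_mul_Smat_pow_mem N.lt_succ_self _) (diagC_mul_Smat_pow_mem N.lt_succ_self _))
  obtain ⟨Q, hQ, r, hr⟩ := exists_eq_mul_add_diagC I hRX
  have hRX' : (diagC M I + Smat M) * X = (Smat M ^ N + Q) * (diagC M I + Smat M) + diagC M r := by
    rw [add_mul (Smat M ^ N), add_assoc, ← hr, add_sub_cancel]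
  have hr0 : r = 0 :=
    eq_zero_of_mul_eq_mul_add_diagC hRX' (diagC_ratioDiag_add_Smat_map_eval_mulVec hμ) hEig hμ
  exact ⟨Q, hQ, by rw [hRX', hr0, map_zero, add_zero]⟩

end Intertwiner

theorem eigenvector_produces_intertwiner_general (M N : ℕ) [NeZero M]
    (β α : ℂ) (hα : α ≠ 0)
    (X : Matrix (Fin M) (Fin M) (Polynomial ℂ)) (hX : X ∈ Wset M N β)
    (Xα : Matrix (Fin M) (Fin M) ℂ)
    (hXα : Xα = X.map fun p => p.eval ((-1 : ℂ) ^ M * α))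
    (μ : Fin M → ℂ) (hμ : ∀ m, μ m ≠ 0) (κ : ℂ) (hEig : Xα.mulVec μ = κ • μ)
    (I : Fin M → ℂ)
    (hI : ∀ m : Fin M,
      I m = -((if (m : ℕ) = M - 1 then (-1 : ℂ) ^ M * α else 1) * μ (m + 1) / μ m))
    (R : Matrix (Fin M) (Fin M) (Polynomial ℂ))
    (hR : R = Matrix.diagonal (fun m => Polynomial.C (I m)) + Smat M) :
    (∏ m, I m = α) ∧
    R.det ≠ 0 ∧
    (∃ Z : Fin N → Fin M → ℂ,
      (R.map (algebraMap (Polynomial ℂ) (RatFunc ℂ)))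
          * (X.map (algebraMap (Polynomial ℂ) (RatFunc ℂ)))
          * (R.map (algebraMap (Polynomial ℂ) (RatFunc ℂ)))⁻¹
        = (Smat M ^ N + ∑ k : Fin N,
            Matrix.diagonal (fun m => Polynomial.C (Z k m)) * Smat M ^ (k : ℕ)).map
              (algebraMap (Polynomial ℂ) (RatFunc ℂ))) ∧
    ((R.map (algebraMap (Polynomial ℂ) (RatFunc ℂ)))
          * (X.map (algebraMap (Polynomial ℂ) (RatFunc ℂ)))
          * (R.map (algebraMap (Polynomial ℂ) (RatFunc ℂ)))⁻¹)
        * R.map (algebraMap (Polynomial ℂ) (RatFunc ℂ))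
      = R.map (algebraMap (Polynomial ℂ) (RatFunc ℂ))
          * X.map (algebraMap (Polynomial ℂ) (RatFunc ℂ)) ∧
    ((∃ κs : Fin M → ℂ, Function.Injective κs ∧
        ∀ i : Fin M, ∃ v : Fin M → ℂ, (∀ m, v m ≠ 0) ∧ Xα.mulVec v = κs i • v) →
      ∃ Rs Xs : Fin M → Matrix (Fin M) (Fin M) (Polynomial ℂ),
        Function.Injective (fun i => (Rs i, Xs i)) ∧
        ∀ i : Fin M,
          (∃ J : Fin M → ℂ,
            Rs i = Matrix.diagonal (fun m => Polynomial.C (J m)) + Smat M ∧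
            ∏ m, J m = α) ∧
          Xs i * Rs i = Rs i * X) := by
  set t := (-1 : ℂ) ^ M * α
  have ht : t ≠ 0 := mul_ne_zero (pow_ne_zero _ (by norm_num)) hα
  have hprod : ∀ {v : Fin M → ℂ}, (∀ m, v m ≠ 0) → ∏ m, ratioDiag M t v m = α :=
    fun hv => by rw [prod_ratioDiag hv, ← mul_assoc, ← mul_pow]; norm_num
  obtain rfl : I = ratioDiag M t μ := funext hI
  rw [← diagC_apply] at hR
  subst hR
  have hdet : (diagC M (ratioDiag M t μ) + Smat M).det ≠ 0 := fun h => hα <| by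
    rw [← hprod hμ, ← eval_zero_det_diagC_add_Smat, h, eval_zero]
  have hXN := sub_Smat_pow_mem_of_mem_Wset hX
  obtain ⟨Q, hQ, hQR⟩ := exists_mul_diagC_ratioDiag_add_Smat_eq hXN hμ (hXα ▸ hEig)
  obtain ⟨Z, rfl⟩ := exists_eq_sum_of_mem_skewDegreeLT hQ
  have hconj := map_mul_mul_inv_eq_map (algebraMap ℂ[X] (RatFunc ℂ))
    (IsFractionRing.injective _ _) hdet hQR
  refine ⟨hprod hμ, hdet, ⟨Z, by rw [hconj]; simp only [diagC_apply]⟩,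
    by rw [hconj, ← Matrix.map_mul, hQR, Matrix.map_mul], ?_⟩
  rintro ⟨κs, hκs, hv⟩
  choose v hv0 hvκ using hv
  choose Q _ hQR using fun i => exists_mul_diagC_ratioDiag_add_Smat_eq hXN (hv0 i) (hXα ▸ hvκ i)
  refine ⟨fun i => diagC M (ratioDiag M t (v i)) + Smat M, fun i => Smat M ^ N + Q i,
    fun i j hij => hκs ?_,
    fun i => ⟨⟨_, congrArg (· + Smat M) (diagC_apply _), hprod (hv0 i)⟩, hQR i⟩⟩
  exact eigenvalue_eq_of_ratioDiag_eq ht (hv0 i) (hv0 j) (hvκ i) (hvκ j)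
    (diagC_injective (add_right_cancel (congr_arg Prod.fst hij)))

/-- precise form of Proposition 2.1: an eigenvector of
`X_α = X((−1)^M α)` with all components nonzero produces a solution `(R, X')` of the
intertwining relation `X' R = R X` with `∏ I_m = α` and `X'` in normal form; and if `X_α`
has `M` distinct eigenvalues each with a nowhere-vanishing eigenvector, there are `M`
distinct such pairs. -/
theorem eigenvector_produces_intertwiner (M N : ℕ) [NeZero M] (hM : 1 ≤ M) (hN : 1 ≤ N)
    (β α : ℂ) (hα : α ≠ 0)
    (X : Matrix (Fin M) (Fin M) (Polynomial ℂ)) (hX : X ∈ Wset M N β)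
    (Xα : Matrix (Fin M) (Fin M) ℂ)
    (hXα : Xα = X.map fun p => p.eval ((-1 : ℂ) ^ M * α))
    (μ : Fin M → ℂ) (hμ : ∀ m, μ m ≠ 0) (κ : ℂ) (hEig : Xα.mulVec μ = κ • μ)
    (I : Fin M → ℂ)
    (hI : ∀ m : Fin M,
      I m = -((if (m : ℕ) = M - 1 then (-1 : ℂ) ^ M * α else 1) * μ (m + 1) / μ m))
    (R : Matrix (Fin M) (Fin M) (Polynomial ℂ))
    (hR : R = Matrix.diagonal (fun m => Polynomial.C (I m)) + Smat M) :
    (∏ m, I m = α) ∧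
    R.det ≠ 0 ∧
    (∃ Z : Fin N → Fin M → ℂ,
      (R.map (algebraMap (Polynomial ℂ) (RatFunc ℂ)))
          * (X.map (algebraMap (Polynomial ℂ) (RatFunc ℂ)))
          * (R.map (algebraMap (Polynomial ℂ) (RatFunc ℂ)))⁻¹
        = (Smat M ^ N + ∑ k : Fin N,
            Matrix.diagonal (fun m => Polynomial.C (Z k m)) * Smat M ^ (k : ℕ)).map
              (algebraMap (Polynomial ℂ) (RatFunc ℂ))) ∧
    ((R.map (algebraMap (Polynomial ℂ) (RatFunc ℂ)))
          * (X.map (algebraMap (Polynomial ℂ) (RatFunc ℂ)))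
          * (R.map (algebraMap (Polynomial ℂ) (RatFunc ℂ)))⁻¹)
        * R.map (algebraMap (Polynomial ℂ) (RatFunc ℂ))
      = R.map (algebraMap (Polynomial ℂ) (RatFunc ℂ))
          * X.map (algebraMap (Polynomial ℂ) (RatFunc ℂ)) ∧
    ((∃ κs : Fin M → ℂ, Function.Injective κs ∧
        ∀ i : Fin M, ∃ v : Fin M → ℂ, (∀ m, v m ≠ 0) ∧ Xα.mulVec v = κs i • v) →
      ∃ Rs Xs : Fin M → Matrix (Fin M) (Fin M) (Polynomial ℂ),
        Function.Injective (fun i => (Rs i, Xs i)) ∧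
        ∀ i : Fin M,
          (∃ J : Fin M → ℂ,
            Rs i = Matrix.diagonal (fun m => Polynomial.C (J m)) + Smat M ∧
            ∏ m, J m = α) ∧
          Xs i * Rs i = Rs i * X) :=
  eigenvector_produces_intertwiner_general M N β α hα X hX Xα hXα μ hμ κ hEig I hI R hR
end

section
/- Let M ≥ 1, let v_1, …, v_M be positive real numbers, and let α be a real number with α > ∏_{m=1}^M v_m > 0. Let A := S_α^{−1} · diag(v_1, …, v_M), where S_α is the constant matrix obtained from S by substituting y = (−1)^M α. Then E + A is invertible and every entry of (E + A)^{−1} satisfies (−1)^{i+j} ((E + A)^{−1})_{i,j} > 0; equivalently, P (E + A)^{−1} P is an entrywise positive matrix. -/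
/-- The constant real `M × M` matrix `S_α`, obtained from `S` by substituting
`y = (−1)^M α`: `(i,j)`-entry `1` if `j = i+1`, `(−1)^M α` if `(i,j) = (M,1)`
(in 1-based indexing), `0` otherwise. -/
noncomputable def SmatR (M : ℕ) (α : ℝ) : Matrix (Fin M) (Fin M) ℝ :=
  Matrix.of fun i j =>
    if (j : ℕ) = (i : ℕ) + 1 then 1
    else if (i : ℕ) = M - 1 ∧ (j : ℕ) = 0 then (-1 : ℝ) ^ M * α else 0

/-!
Conjugating by `P = diag((-1)^k)` turns `E + A` into `E - N`, where `N` is the weighted cyclic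
shift `e_j ↦ w_j e_{j+1}` with positive weights `w = (v_1, …, v_{M-1}, v_M / α)`.
Since `N^M = (∏ w) E` and `∏ w = ∏ v / α < 1`, the finite geometric series gives
`(E - N)⁻¹ = (1 - ∏ w)⁻¹ (E + N + ⋯ + N^{M-1})`, and this sum is entrywise positive
because `N^k` has a positive entry at `(j + k, j)` for every `j`.
-/

open Finset Matrix

namespace Matrix

variable {n R : Type*} [DecidableEq n]

def monomialMatrix [Zero R] (τ : Equiv.Perm n) (u : n → R) : Matrix n n R :=
  of fun i j => if i = τ j then u j else 0

@[simp]
theorem monomialMatrix_apply [Zero R] (τ : Equiv.Perm n) (u : n → R) (i j : n) :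
    monomialMatrix τ u i j = if i = τ j then u j else 0 :=
  rfl

theorem monomialMatrix_one [Zero R] (u : n → R) : monomialMatrix 1 u = diagonal u := by
  ext i j
  by_cases h : i = j <;> simp [h]

theorem neg_monomialMatrix [NegZeroClass R] (τ : Equiv.Perm n) (u : n → R) :
    -monomialMatrix τ u = monomialMatrix τ (-u) := by
  ext i j
  by_cases h : i = τ j <;> simp [h]

variable [Fintype n]

theorem monomialMatrix_mul_monomialMatrix [NonUnitalNonAssocSemiring R]
    (τ ρ : Equiv.Perm n) (u u' : n → R) :
    monomialMatrix τ u * monomialMatrix ρ u' =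
      monomialMatrix (τ * ρ) fun j => u (ρ j) * u' j := by
  ext i j
  rw [mul_apply, sum_eq_single (ρ j) (fun l _ hl => by simp [hl]) (by simp)]
  by_cases h : i = τ (ρ j) <;> simp [h]

theorem monomialMatrix_pow [CommSemiring R] (τ : Equiv.Perm n) (u : n → R) (k : ℕ) :
    monomialMatrix τ u ^ k =
      monomialMatrix (τ ^ k) fun j => ∏ l ∈ range k, u ((τ ^ l) j) := by
  induction k with
  | zero => simp [monomialMatrix_one]
  | succ k ih =>
    rw [pow_succ, ih, monomialMatrix_mul_monomialMatrix, ← pow_succ]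
    congr 1
    funext j
    rw [prod_range_succ']
    simp [pow_succ, Equiv.Perm.mul_apply]

theorem sum_pow_monomialMatrix_apply_pos [CommSemiring R] [PartialOrder R]
    [IsStrictOrderedRing R] {τ : Equiv.Perm n} {u : n → R} (hu : ∀ j, 0 < u j)
    {i j : n} {k K : ℕ} (hk : k < K) (hij : (τ ^ k) j = i) :
    0 < (∑ l ∈ range K, monomialMatrix τ u ^ l) i j := by
  have hentry (l : ℕ) : (monomialMatrix τ u ^ l) i j =
      if i = (τ ^ l) j then ∏ m ∈ range l, u ((τ ^ m) j) else 0 := by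
    rw [monomialMatrix_pow, monomialMatrix_apply]
  rw [sum_apply]
  refine sum_pos' (fun l _ => ?_) ⟨k, mem_range.2 hk, ?_⟩
  · rw [hentry]
    split_ifs
    · exact (prod_pos fun m _ => hu _).le
    · exact le_rfl
  · rw [hentry, if_pos hij.symm]
    exact prod_pos fun m _ => hu _

end Matrix

theorem one_sub_mul_smul_geom_sum_eq_one {K A : Type*} [Field K] [Ring A] [Algebra K A]
    {x : A} {r : K} {m : ℕ} (hx : x ^ m = r • 1) (hr : r ≠ 1) :
    (1 - x) * ((1 - r)⁻¹ • ∑ k ∈ range m, x ^ k) = 1 := by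
  have hsub : (1 : A) - r • 1 = (1 - r) • 1 := by rw [sub_smul, one_smul]
  rw [mul_smul_comm, mul_neg_geom_sum, hx, hsub, smul_smul,
    inv_mul_cancel₀ (sub_ne_zero.2 hr.symm), one_smul]

theorem one_add_mul_conj_eq_one {R : Type*} [Ring R] {P A N B : R} (hPP : P * P = 1)
    (hPAP : P * A * P = -N) (hB : (1 - N) * B = 1) : (1 + A) * (P * B * P) = 1 := by
  have h1A : 1 + A = P * (1 - N) * P := by
    rw [← neg_neg N, ← hPAP, mul_sub, sub_mul, mul_one, hPP, mul_neg, neg_mul, sub_neg_eq_add]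
    simp only [← mul_assoc, hPP, one_mul]
    rw [mul_assoc A, hPP, mul_one]
  simp only [h1A, mul_assoc]
  rw [← mul_assoc P P, hPP, one_mul, ← mul_assoc (1 - N), hB, one_mul, hPP]

open Fin.NatCast in
theorem finRotate_succ_pow_apply (n k : ℕ) (j : Fin (n + 1)) :
    (finRotate (n + 1) ^ k) j = j + (k : Fin (n + 1)) := by
  induction k with
  | zero => simp
  | succ k ih => rw [pow_succ', Equiv.Perm.mul_apply, ih, finRotate_apply, Nat.cast_succ, add_assoc]

theorem finRotate_succ_pow_self (n : ℕ) : finRotate (n + 1) ^ (n + 1) = 1 := by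
  ext j
  simp [finRotate_succ_pow_apply]

open Fin.NatCast in
theorem exists_finRotate_succ_pow_apply_eq (n : ℕ) (i j : Fin (n + 1)) :
    ∃ k < n + 1, (finRotate (n + 1) ^ k) j = i :=
  ⟨(i - j : Fin (n + 1)), (i - j).is_lt, by
    rw [finRotate_succ_pow_apply, Fin.cast_val_eq_self, add_sub_cancel]⟩

open Fin.NatCast in
theorem prod_range_finRotate_succ_pow_apply {β : Type*} [CommMonoid β] (n : ℕ)
    (u : Fin (n + 1) → β) (j : Fin (n + 1)) :
    ∏ l ∈ range (n + 1), u ((finRotate (n + 1) ^ l) j) = ∏ i, u i := by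
  simp_rw [finRotate_succ_pow_apply, ← Fin.prod_univ_eq_prod_range (fun l => u (j + l)),
    Fin.cast_val_eq_self]
  exact Fintype.prod_equiv (Equiv.addLeft j) _ _ fun _ => rfl

theorem Matrix.monomialMatrix_finRotate_pow_self {R : Type*} [CommSemiring R] (n : ℕ)
    (u : Fin (n + 1) → R) :
    monomialMatrix (finRotate (n + 1)) u ^ (n + 1) = (∏ i, u i) • 1 := by
  rw [monomialMatrix_pow, finRotate_succ_pow_self, monomialMatrix_one, smul_one_eq_diagonal]
  simp_rw [prod_range_finRotate_succ_pow_apply]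

def altSignMatrix (R : Type*) [Ring R] (M : ℕ) : Matrix (Fin M) (Fin M) R :=
  diagonal fun k => (-1) ^ (k : ℕ)

theorem altSignMatrix_mul_self (R : Type*) [Ring R] (M : ℕ) :
    altSignMatrix R M * altSignMatrix R M = 1 := by
  rw [altSignMatrix, diagonal_mul_diagonal, ← diagonal_one]
  simp_rw [← pow_add, Even.neg_one_pow ⟨_, rfl⟩]

theorem altSignMatrix_mul_mul_altSignMatrix_apply {R : Type*} [CommRing R] {M : ℕ}
    (X : Matrix (Fin M) (Fin M) R) (i j : Fin M) :
    (altSignMatrix R M * X * altSignMatrix R M) i j = (-1) ^ ((i : ℕ) + j) * X i j := by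
  rw [altSignMatrix, mul_diagonal, diagonal_mul, pow_add]
  ring

theorem SmatR_apply_finRotate (n : ℕ) (α : ℝ) (i j : Fin (n + 1)) :
    SmatR (n + 1) α i (finRotate (n + 1) j) =
      if i = j then (if j = Fin.last n then (-1) ^ (n + 1) * α else 1) else 0 := by
  have hi := i.is_lt
  have hj := j.is_lt
  simp only [SmatR, of_apply, coe_finRotate, Fin.ext_iff, Fin.val_last, Nat.add_sub_cancel]
  split_ifs <;> first | rfl | omega | simp_all

theorem SmatR_mul_monomialMatrix_finRotate (n : ℕ) (α : ℝ) (u : Fin (n + 1) → ℝ) :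
    SmatR (n + 1) α * monomialMatrix (finRotate (n + 1)) u =
      diagonal fun j => (if j = Fin.last n then (-1) ^ (n + 1) * α else 1) * u j := by
  ext i j
  rw [mul_apply, sum_eq_single (finRotate (n + 1) j)
    (fun l _ hl => by rw [monomialMatrix_apply, if_neg hl, mul_zero]) (by simp),
    monomialMatrix_apply, if_pos rfl, SmatR_apply_finRotate, diagonal_apply]
  split_ifs <;> simp_all

theorem inv_SmatR (n : ℕ) {α : ℝ} (hα : α ≠ 0) :
    (SmatR (n + 1) α)⁻¹ = monomialMatrix (finRotate (n + 1))
      fun j => (if j = Fin.last n then (-1) ^ (n + 1) * α else 1)⁻¹ := by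
  refine inv_eq_right_inv ?_
  rw [SmatR_mul_monomialMatrix_finRotate, ← diagonal_one]
  congr 1
  funext j
  refine mul_inv_cancel₀ ?_
  split_ifs <;> simp [hα]

theorem altSignMatrix_mul_inv_SmatR_mul_diagonal_mul_altSignMatrix (n : ℕ) {α : ℝ}
    (hα : α ≠ 0) (v : Fin (n + 1) → ℝ) :
    altSignMatrix ℝ (n + 1) * ((SmatR (n + 1) α)⁻¹ * diagonal v) * altSignMatrix ℝ (n + 1) =
      -monomialMatrix (finRotate (n + 1)) fun j => if j = Fin.last n then v j / α else v j := by
  rw [inv_SmatR n hα, altSignMatrix, ← monomialMatrix_one, ← monomialMatrix_one,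
    monomialMatrix_mul_monomialMatrix, monomialMatrix_mul_monomialMatrix,
    monomialMatrix_mul_monomialMatrix, neg_monomialMatrix]
  simp only [one_mul, mul_one, Equiv.Perm.coe_one, id]
  congr 1
  funext j
  rw [Pi.neg_apply]
  by_cases hj : j = Fin.last n
  · subst hj
    simp only [finRotate_last, if_true, Fin.val_zero, Fin.val_last, pow_zero, one_mul, pow_succ]
    field_simp
  · simp only [coe_finRotate_of_ne_last hj, hj, if_false, pow_succ, inv_one, one_mul]
    have hsq : (-1 : ℝ) ^ ((j : ℕ) + j) = 1 := Even.neg_one_pow ⟨j, rfl⟩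
    linear_combination (-v j) * hsq

theorem Fin.prod_ite_last_div {β : Type*} [DivisionCommMonoid β] {n : ℕ}
    (v : Fin (n + 1) → β) (α : β) :
    ∏ j, (if j = Fin.last n then v j / α else v j) = (∏ j, v j) / α := by
  simp [Fin.prod_univ_castSucc, Fin.castSucc_ne_last, mul_div_assoc]

/-- with `A = S_α⁻¹ diag(v)` for positive `v` and `α > ∏ v_m > 0`,
`E + A` is invertible and the entries of `(E + A)⁻¹` have strict sign pattern
`(−1)^{i+j}`; equivalently, `P (E + A)⁻¹ P` is entrywise positive, where
`P = diag(1,−1,1,…)`. -/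
theorem neumann_series_sign_pattern (M : ℕ) (hM : 1 ≤ M)
    (v : Fin M → ℝ) (hv : ∀ m, 0 < v m)
    (α : ℝ) (hα : ∏ m, v m < α)
    (A : Matrix (Fin M) (Fin M) ℝ)
    (hA : A = (SmatR M α)⁻¹ * Matrix.diagonal v) :
    IsUnit (1 + A) ∧
    (∀ i j : Fin M, 0 < (-1 : ℝ) ^ ((i : ℕ) + (j : ℕ)) * (1 + A)⁻¹ i j) ∧
    (∀ i j : Fin M,
      0 < (Matrix.diagonal (fun k : Fin M => (-1 : ℝ) ^ (k : ℕ)) * (1 + A)⁻¹ *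
            Matrix.diagonal (fun k : Fin M => (-1 : ℝ) ^ (k : ℕ))) i j) := by
  obtain ⟨n, rfl⟩ : ∃ n, M = n + 1 := ⟨M - 1, by omega⟩
  have hα0 : 0 < α := (prod_pos fun m _ => hv m).trans hα
  set w : Fin (n + 1) → ℝ := fun j => if j = Fin.last n then v j / α else v j with hw_def
  set N := monomialMatrix (finRotate (n + 1)) w
  set B := (1 - ∏ j, w j)⁻¹ • ∑ k ∈ range (n + 1), N ^ k
  set P := altSignMatrix ℝ (n + 1)
  have hw (j : Fin (n + 1)) : 0 < w j := by
    simp only [hw_def]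
    split_ifs
    exacts [div_pos (hv j) hα0, hv j]
  have hr : ∏ j, w j < 1 := by rwa [Fin.prod_ite_last_div, div_lt_one hα0]
  have hBpos (i j : Fin (n + 1)) : 0 < B i j := by
    obtain ⟨k, hk, hkij⟩ := exists_finRotate_succ_pow_apply_eq n i j
    exact smul_pos (inv_pos.2 (sub_pos.2 hr)) (sum_pow_monomialMatrix_apply_pos hw hk hkij)
  have hinv : (1 + A) * (P * B * P) = 1 :=
    one_add_mul_conj_eq_one (altSignMatrix_mul_self ℝ (n + 1))
      (hA ▸ altSignMatrix_mul_inv_SmatR_mul_diagonal_mul_altSignMatrix n hα0.ne' v)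
      (one_sub_mul_smul_geom_sum_eq_one (monomialMatrix_finRotate_pow_self n w) hr.ne)
  have hconj : P * (1 + A)⁻¹ * P = B := by
    have hPP := altSignMatrix_mul_self ℝ (n + 1)
    rw [inv_eq_right_inv hinv, ← mul_assoc, ← mul_assoc, hPP, one_mul, mul_assoc, hPP, mul_one]
  refine ⟨(isUnit_iff_isUnit_det _).2 (isUnit_det_of_right_inverse hinv), fun i j => ?_,
    fun i j => hconj ▸ hBpos i j⟩
  rw [← altSignMatrix_mul_mul_altSignMatrix_apply, hconj]
  exact hBpos i j
end

section
/- Let M, N ≥ 1 and let real numbers V_{n,m} > 0 (1 ≤ n ≤ N, 1 ≤ m ≤ M) satisfy ∏_{m=1}^M V_{n,m} = β for every n, and let α ∈ ℝ with α > β > 0. Let X_α := (V_N + S_α) ⋯ (V_2 + S_α)(V_1 + S_α) with V_n := diag(V_{n,1}, …, V_{n,M}). Then X_α is invertible and the matrix (−1)^N P X_α^{−1} P has all entries strictly positive. -/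
/-!
Conjugation by `P` turns each factor `-(V_n + S_α)` into `C_α - V_n`, where `C_α` is the cyclic
shift with `α` in its corner, so that `P ((-1)^N X_α) P` is the product of the `C_α - V_n`.
With `p_i = d_0 ⋯ d_{i-1}` and `β = p_M`, the inverse of `C_α - diag d` is explicit: its
`(i, j)` entry is `p_i / p_{j+1} * (β / (α - β) + [j < i])`, positive when `d > 0` and `α > β`.
Entrywise positivity of inverses is preserved by products.
-/

open Matrix

namespace Fin

theorem partialProd_last {M : Type*} [CommMonoid M] {n : ℕ} (f : Fin n → M) :
    partialProd f (last n) = ∏ i, f i := by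
  rw [partialProd, val_last, List.take_of_length_le (by simp), List.prod_ofFn]

theorem partialProd_ne_zero {M₀ : Type*} [MonoidWithZero M₀] [NoZeroDivisors M₀]
    [Nontrivial M₀] {n : ℕ}
    {f : Fin n → M₀} (hf : ∀ i, f i ≠ 0) (i : Fin (n + 1)) : partialProd f i ≠ 0 := by
  induction i using Fin.induction with
  | zero => simp
  | succ i ih => rw [partialProd_succ]; exact mul_ne_zero ih (hf i)

theorem partialProd_pos {R : Type*} [CommSemiring R] [PartialOrder R] [IsStrictOrderedRing R]
    {n : ℕ} {f : Fin n → R} (hf : ∀ i, 0 < f i) (i : Fin (n + 1)) : 0 < partialProd f i := by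
  induction i using Fin.induction with
  | zero => simp
  | succ i ih => rw [partialProd_succ]; exact mul_pos ih (hf i)

end Fin

theorem List.mul_prod_mul_eq_prod_map {M : Type*} [Monoid M] {p : M} (hp : p * p = 1)
    (l : List M) : p * l.prod * p = (l.map (p * · * p)).prod := by
  induction l with
  | nil => simpa using hp
  | cons a l ih =>
    rw [List.map_cons, List.prod_cons, List.prod_cons, ← ih]
    calc p * (a * l.prod) * p = p * a * (p * p) * l.prod * p := by rw [hp]; noncomm_ring
      _ = p * a * p * (p * l.prod * p) := by noncomm_ring

theorem List.prod_map_neg_eq_smul {R A : Type*} [CommRing R] [Ring A] [Algebra R A]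
    (l : List A) : (l.map Neg.neg).prod = (-1 : R) ^ l.length • l.prod := by
  rw [List.prod_map_neg, Algebra.smul_def, map_pow, map_neg, map_one]

section HasPosInverse

variable {ι K : Type*} [Fintype ι] [DecidableEq ι] [CommRing K] [PartialOrder K]

def HasPosInverse (A : Matrix ι ι K) : Prop :=
  IsUnit A ∧ ∀ i j, 0 < A⁻¹ i j

theorem HasPosInverse.mul [IsStrictOrderedRing K] [Nonempty ι] {A B : Matrix ι ι K}
    (hA : HasPosInverse A) (hB : HasPosInverse B) : HasPosInverse (A * B) := by
  refine ⟨hA.1.mul hB.1, fun i j => ?_⟩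
  rw [Matrix.mul_inv_rev, mul_apply]
  exact Finset.sum_pos (fun k _ => mul_pos (hB.2 i k) (hA.2 k j)) Finset.univ_nonempty

theorem HasPosInverse.of_conj_smul {P X : Matrix ι ι K} {c : K} (hP : P * P = 1)
    (hc : c * c = 1) (h : HasPosInverse (P * (c • X) * P)) :
    IsUnit X ∧ ∀ i j, 0 < c * (P * X⁻¹ * P) i j := by
  set Z := P * (c • X) * P
  have hZ : Z * Z⁻¹ = 1 := mul_nonsing_inv Z ((isUnit_iff_isUnit_det Z).1 h.1)
  have hright : X * (c • (P * Z⁻¹ * P)) = 1 :=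
    calc X * (c • (P * Z⁻¹ * P)) = P * P * (c • X) * (P * Z⁻¹ * P) := by
          rw [hP, one_mul, Matrix.mul_smul, Matrix.smul_mul]
      _ = P * (Z * Z⁻¹) * P := by simp only [Z, mul_assoc]
      _ = 1 := by rw [hZ, mul_one, hP]
  refine ⟨IsUnit.of_mul_eq_one _ hright, fun i j => ?_⟩
  have hconj : P * (c • (P * Z⁻¹ * P)) * P = c • Z⁻¹ := by
    rw [Matrix.mul_smul, Matrix.smul_mul]
    simp only [← mul_assoc, hP, one_mul]
    rw [mul_assoc, hP, mul_one]
  rw [inv_eq_right_inv hright, hconj, Matrix.smul_apply, smul_eq_mul, ← mul_assoc, hc, one_mul]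
  exact h.2 i j

end HasPosInverse

def cycleMatrix {K : Type*} [Zero K] [One K] (n : ℕ) (a : K) : Matrix (Fin n) (Fin n) K :=
  of fun i j => if (j : ℕ) = i + 1 then 1 else if (i : ℕ) = n - 1 ∧ (j : ℕ) = 0 then a else 0

theorem cycleMatrix_mul_apply {K : Type*} [Semiring K] {n : ℕ} (a : K)
    (B : Matrix (Fin n) (Fin n) K) (i j : Fin n) :
    (cycleMatrix n a * B) i j =
      if h : (i : ℕ) + 1 < n then B ⟨i + 1, h⟩ j else a * B ⟨0, by omega⟩ j := by
  rw [mul_apply]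
  split_ifs with h
  · rw [Finset.sum_eq_single ⟨i + 1, h⟩]
    · simp [cycleMatrix]
    · intro k _ hk
      have : (k : ℕ) ≠ i + 1 := fun e => hk (Fin.ext e)
      simp [cycleMatrix, this]; omega
    · simp
  · rw [Finset.sum_eq_single ⟨0, by omega⟩]
    · simp [cycleMatrix]; omega
    · intro k _ hk
      have : (k : ℕ) ≠ 0 := fun e => hk (Fin.ext e)
      simp [cycleMatrix, this]; omega
    · simp

section CycleInverse

variable {K : Type*} [Field K] {n : ℕ}

noncomputable def cycleInv (a : K) (d : Fin n → K) : Matrix (Fin n) (Fin n) K :=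
  of fun i j => Fin.partialProd d i.castSucc / Fin.partialProd d j.succ *
    ((∏ k, d k) / (a - ∏ k, d k) + if j < i then 1 else 0)

theorem cycleMatrix_sub_diagonal_mul_cycleInv {a : K} {d : Fin n → K} (hd : ∀ k, d k ≠ 0)
    (ha : a ≠ ∏ k, d k) : (cycleMatrix n a - diagonal d) * cycleInv a d = 1 := by
  have hp := Fin.partialProd_ne_zero hd
  have hc : (a - ∏ k, d k) * ((∏ k, d k) / (a - ∏ k, d k)) = ∏ k, d k :=
    mul_div_cancel₀ _ (sub_ne_zero.2 ha)
  have hβ : Fin.partialProd d (Fin.last n) = ∏ k, d k := Fin.partialProd_last d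
  ext i j
  rw [sub_mul, Matrix.sub_apply, cycleMatrix_mul_apply, diagonal_mul, one_apply]
  simp only [cycleInv, of_apply]
  generalize (∏ k, d k) / (a - ∏ k, d k) = c at hc ⊢
  generalize (∏ k, d k) = β at hc hβ
  by_cases hi : (i : ℕ) + 1 < n
  · have hsucc : (⟨i + 1, hi⟩ : Fin n).castSucc = i.succ := rfl
    rw [dif_pos hi, hsucc, Fin.partialProd_succ d i]
    rcases lt_trichotomy j i with hji | rfl | hij
    · have hji' : j < ⟨i + 1, hi⟩ := Fin.lt_def.2 (by simp; omega)
      rw [if_pos hji', if_pos hji, if_neg (ne_of_gt hji)]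
      ring
    · rw [if_pos (Fin.lt_def.2 (by simp)), if_neg (lt_irrefl _), if_pos rfl,
        Fin.partialProd_succ]
      field_simp [hp j.castSucc, hd j]
      ring
    · have hij' : ¬ j < ⟨i + 1, hi⟩ := by rw [Fin.lt_def]; simp; omega
      rw [if_neg hij', if_neg (not_lt.2 hij.le), if_neg (ne_of_lt hij)]
      ring
  · have hlast : i.succ = Fin.last n := Fin.ext (by simp; omega)
    have hp_last : Fin.partialProd d i.castSucc * d i = β := by
      rw [← Fin.partialProd_succ, hlast, hβ]
    have h0 : Fin.partialProd d (⟨0, by omega⟩ : Fin n).castSucc = 1 := Fin.partialProd_zero d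
    have hj0 : ¬ j < ⟨0, by omega⟩ := by simp [Fin.lt_def]
    rw [dif_neg hi, h0, if_neg hj0, add_zero]
    rcases (Fin.le_iff_val_le_val.2 (by omega : (j : ℕ) ≤ i)).lt_or_eq with hji | rfl
    · rw [if_pos hji, if_neg (ne_of_gt hji)]
      linear_combination (hc - (c + 1) * hp_last) / Fin.partialProd d j.succ
    · rw [if_neg (lt_irrefl _), if_pos rfl, Fin.partialProd_succ, hp_last]
      have : β ≠ 0 := hp_last ▸ mul_ne_zero (hp _) (hd j)
      field_simp
      linear_combination hc - c * hp_last

variable [LinearOrder K] [IsStrictOrderedRing K]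

theorem cycleInv_pos {a : K} {d : Fin n → K} (hd : ∀ k, 0 < d k) (ha : ∏ k, d k < a)
    (i j : Fin n) : 0 < cycleInv a d i j := by
  have hc : 0 < (∏ k, d k) / (a - ∏ k, d k) :=
    div_pos (Finset.prod_pos fun k _ => hd k) (sub_pos.2 ha)
  refine mul_pos (div_pos (Fin.partialProd_pos hd _) (Fin.partialProd_pos hd _)) ?_
  split_ifs <;> linarith

theorem hasPosInverse_cycleMatrix_sub_diagonal {a : K} {d : Fin n → K} (hd : ∀ k, 0 < d k)
    (ha : ∏ k, d k < a) : HasPosInverse (cycleMatrix n a - diagonal d) := by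
  have h := cycleMatrix_sub_diagonal_mul_cycleInv (fun k => (hd k).ne') ha.ne'
  refine ⟨IsUnit.of_mul_eq_one _ h, ?_⟩
  rw [inv_eq_right_inv h]
  exact cycleInv_pos hd ha

end CycleInverse

section SignMatrix

variable {K : Type*} [CommRing K] {n : ℕ}

def signMatrix (n : ℕ) : Matrix (Fin n) (Fin n) K := diagonal fun k => (-1) ^ (k : ℕ)

theorem signMatrix_mul_diagonal_mul_signMatrix (d : Fin n → K) :
    signMatrix n * diagonal d * signMatrix n = diagonal d := by
  simp only [signMatrix, diagonal_mul_diagonal]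
  congr 1
  ext k
  rcases neg_one_pow_eq_or K k with h | h <;> simp [h]

theorem signMatrix_mul_self : signMatrix n * signMatrix n = (1 : Matrix (Fin n) (Fin n) K) := by
  simpa using signMatrix_mul_diagonal_mul_signMatrix (n := n) (fun _ => (1 : K))

theorem signMatrix_mul_cycleMatrix_mul_signMatrix (a : K) :
    signMatrix n * cycleMatrix n a * signMatrix n = -cycleMatrix n ((-1) ^ n * a) := by
  ext i j
  simp only [signMatrix, diagonal_mul, mul_diagonal, cycleMatrix, of_apply, Matrix.neg_apply]
  split_ifs with hsucc hcorner
  · rcases neg_one_pow_eq_or K i with h | h <;> simp [hsucc, pow_succ, h]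
  · have hn : (-1 : K) ^ n = -(-1) ^ (i : ℕ) := by
      rw [← neg_one_mul ((-1 : K) ^ (i : ℕ)), ← pow_succ']; congr 1; omega
    rw [hcorner.2, hn]
    ring
  · simp

end SignMatrix

theorem signMatrix_mul_diagonal_add_SmatR_mul_signMatrix {n : ℕ} (d : Fin n → ℝ) (α : ℝ) :
    signMatrix n * (diagonal d + SmatR n α) * signMatrix n = diagonal d - cycleMatrix n α := by
  have hS : SmatR n α = cycleMatrix n ((-1) ^ n * α) := rfl
  rw [mul_add, add_mul, signMatrix_mul_diagonal_mul_signMatrix, hS,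
    signMatrix_mul_cycleMatrix_mul_signMatrix, ← mul_assoc, ← mul_pow, neg_one_mul, neg_neg,
    one_pow, one_mul, sub_eq_add_neg]

theorem Xalpha_inverse_positive_general (M N : ℕ) (hM : 1 ≤ M) (hN : 1 ≤ N)
    (β α : ℝ) (hαβ : β < α)
    (V : ℕ → Fin M → ℝ)
    (hVpos : ∀ n, 1 ≤ n → n ≤ N → ∀ m, 0 < V n m)
    (hVβ : ∀ n, 1 ≤ n → n ≤ N → ∏ m, V n m = β)
    (Xα : Matrix (Fin M) (Fin M) ℝ)
    (hXα : Xα = (((List.range N).map fun k =>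
        Matrix.diagonal (V (N - k)) + SmatR M α).prod)) :
    IsUnit Xα ∧
    ∀ i j : Fin M,
      0 < (-1 : ℝ) ^ N *
        (Matrix.diagonal (fun k : Fin M => (-1 : ℝ) ^ (k : ℕ)) * Xα⁻¹ *
          Matrix.diagonal (fun k : Fin M => (-1 : ℝ) ^ (k : ℕ))) i j := by
  have : Nonempty (Fin M) := ⟨⟨0, hM⟩⟩
  have hsign : (-1 : ℝ) ^ N * (-1) ^ N = 1 := by rw [← mul_pow]; norm_num
  refine HasPosInverse.of_conj_smul (P := signMatrix M) signMatrix_mul_self hsign ?_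
  have hX : (-1 : ℝ) ^ N • Xα = (((List.range N).map fun k =>
      diagonal (V (N - k)) + SmatR M α).map Neg.neg).prod := by
    rw [List.prod_map_neg_eq_smul (R := ℝ), List.length_map, List.length_range, hXα]
  rw [hX, List.mul_prod_mul_eq_prod_map signMatrix_mul_self, List.map_map, List.map_map]
  refine List.prod_induction_nonempty _ (fun _ _ => HasPosInverse.mul) (by simp; omega) ?_
  simp only [List.mem_map, List.mem_range]
  rintro _ ⟨k, hk, rfl⟩
  rw [Function.comp_apply, Function.comp_apply, mul_neg, neg_mul,
    signMatrix_mul_diagonal_add_SmatR_mul_signMatrix, neg_sub]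
  exact hasPosInverse_cycleMatrix_sub_diagonal (hVpos (N - k) (by omega) (by omega))
    (by rw [hVβ (N - k) (by omega) (by omega)]; exact hαβ)

/-- for positive data with row products `β` and `α > β > 0`, the matrix
`X_α` is invertible and `(−1)^N P X_α⁻¹ P` has all entries strictly positive, where
`P = diag(1,−1,1,…)`. -/
theorem Xalpha_inverse_positive (M N : ℕ) (hM : 1 ≤ M) (hN : 1 ≤ N)
    (β α : ℝ) (hβ : 0 < β) (hαβ : β < α)
    (V : ℕ → Fin M → ℝ)
    (hVpos : ∀ n, 1 ≤ n → n ≤ N → ∀ m, 0 < V n m)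
    (hVβ : ∀ n, 1 ≤ n → n ≤ N → ∏ m, V n m = β)
    (Xα : Matrix (Fin M) (Fin M) ℝ)
    (hXα : Xα = (((List.range N).map fun k =>
        Matrix.diagonal (V (N - k)) + SmatR M α).prod)) :
    IsUnit Xα ∧
    ∀ i j : Fin M,
      0 < (-1 : ℝ) ^ N *
        (Matrix.diagonal (fun k : Fin M => (-1 : ℝ) ^ (k : ℕ)) * Xα⁻¹ *
          Matrix.diagonal (fun k : Fin M => (-1 : ℝ) ^ (k : ℕ))) i j :=
  Xalpha_inverse_positive_general M N hM hN β α hαβ V hVpos hVβ Xα hXα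
end
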